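/- arXiv:2203.03751 — 7 statements merged into one kernel-verified Lean document; each statement's English description precedes it below -/
import Mathlib

section
/- In the instance with two classes N₁ = {a₁,a₂,a₃}, N₂ = {b₁,b₂,b₃}, and items o₁,o₂,o₃,o₄ arriving in order, where oᵢ is liked by aᵢ and bᵢ for i ∈ {1,2,3} and o₄ is liked only by a₁ and b₁, every non-wasteful online integral matching algorithm produces a final matching X in which (up to symmetry between the classes) one class receives 1 item while its optimistic value for the other class's items minus any single item is 2; hence no deterministic non-wasteful online algorithm is α-CEF1 for any α > 1/2. -/
open Finset

variable {A : Type*} [Fintype A] [DecidableEq A] {k : ℕ}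

/-- The set of agents that like the item arriving at step `t`. -/
def likersAt (L : List (Finset A)) (t : ℕ) : Finset A := L.getD t ∅

/-- A finset of (item index, agent) pairs is a partial matching. -/
def IsPartialMatching (P : Finset (ℕ × A)) : Prop :=
  ∀ p ∈ P, ∀ q ∈ P, (p.1 = q.1 ∨ p.2 = q.2) → p = q

instance (P : Finset (ℕ × A)) : Decidable (IsPartialMatching P) := by
  unfold IsPartialMatching; infer_instance

/-- Optimistic valuation `V*` of the class with agents `C` for the set `S` of item
indices: the maximum size of a matching between `S` and `C` along the likes in `L`. -/
def Vstar (L : List (Finset A)) (C : Finset A) (S : Finset ℕ) : ℕ :=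
  ((S ×ˢ C).powerset.filter
    (fun P => (∀ p ∈ P, p.2 ∈ likersAt L p.1) ∧ IsPartialMatching P)).sup Finset.card

/-- The agents of class `i`. -/
def classAgents (classOf : A → Fin k) (i : Fin k) : Finset A :=
  Finset.univ.filter fun a => classOf a = i

/-- A deterministic online algorithm: given the liker sets of previously arrived items
and the liker set of the current item, it proposes an agent (or discards the item). -/
abbrev OnlineAlg (A : Type*) := List (Finset A) → Finset A → Option A

/-- The set of agents matched before step `t` when `Alg` runs on instance `L`. -/
def matchedUpTo (Alg : OnlineAlg A) (L : List (Finset A)) : ℕ → Finset A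
  | 0 => ∅
  | t + 1 =>
    let prev := matchedUpTo Alg L t
    match Alg (L.take t) (likersAt L t) with
    | some a => if a ∈ likersAt L t ∧ a ∉ prev then insert a prev else prev
    | none => prev

/-- The agent to whom item `t` is (irrevocably) matched by `Alg` on instance `L`;
a proposal is effective only if the proposed agent likes the item and is unmatched. -/
def assignAt (Alg : OnlineAlg A) (L : List (Finset A)) (t : ℕ) : Option A :=
  match Alg (L.take t) (likersAt L t) with
  | some a => if a ∈ likersAt L t ∧ a ∉ matchedUpTo Alg L t then some a else none
  | none => none

/-- The set of items matched to agents of class `j`. -/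
def classItems (classOf : A → Fin k) (Alg : OnlineAlg A) (L : List (Finset A))
    (j : Fin k) : Finset ℕ :=
  (Finset.range L.length).filter fun t =>
    ∃ a ∈ (Finset.univ : Finset A), assignAt Alg L t = some a ∧ classOf a = j

/-- Non-wastefulness of an online algorithm: whenever an arriving item is liked by
some currently unmatched agent, the item is matched. -/
def NonWasteful (Alg : OnlineAlg A) : Prop :=
  ∀ (L : List (Finset A)) (t : ℕ), t < L.length →
    (∃ a ∈ likersAt L t, a ∉ matchedUpTo Alg L t) → (assignAt Alg L t).isSome

/-- `Alg` is `α`-CEF1: on every instance, for every pair of classes `i, j`, either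
class `j` receives no item or the envy of `i` towards `j` is bounded after removing
one item from `j`'s bundle. -/
def IsCEF1 (classOf : A → Fin k) (α : ℝ) (Alg : OnlineAlg A) : Prop :=
  ∀ (L : List (Finset A)) (i j : Fin k),
    classItems classOf Alg L j = ∅ ∨
    ∃ t ∈ classItems classOf Alg L j,
      ((classItems classOf Alg L i).card : ℝ) ≥
        α * (Vstar L (classAgents classOf i) (classItems classOf Alg L j \ {t}) : ℝ)

/-- The maximin share of class `i`: the best over indivisible matchings `X` of all
items to all agents of the worst bundle value `V*ᵢ(Yⱼ(X))` over classes `j`. -/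
noncomputable def mmsShare (classOf : A → Fin k) (L : List (Finset A)) (i : Fin k) : ℕ :=
  sSup {v : ℕ | ∃ X ∈ ((Finset.range L.length) ×ˢ (Finset.univ : Finset A)).powerset,
    (∀ p ∈ X, p.2 ∈ likersAt L p.1) ∧ IsPartialMatching X ∧
    ∀ j : Fin k, v ≤ Vstar L (classAgents classOf i)
      ((X.filter fun p => classOf p.2 = j).image Prod.fst)}

/-- `Alg` is `α`-CMMS on every instance. -/
def IsCMMS (classOf : A → Fin k) (α : ℝ) (Alg : OnlineAlg A) : Prop :=
  ∀ (L : List (Finset A)) (i : Fin k),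
    ((classItems classOf Alg L i).card : ℝ) ≥ α * (mmsShare classOf L i : ℝ)

set_option linter.unusedSectionVars false

section Helpers

lemma take_of_take_succ {α : Type*} {L₁ L₂ : List α} {t : ℕ}
    (h : L₁.take (t+1) = L₂.take (t+1)) : L₁.take t = L₂.take t := by
  have := congrArg (List.take t) h
  simpa [List.take_take] using this

lemma likersAt_congr {L₁ L₂ : List (Finset A)} {t : ℕ}
    (h : L₁.take (t+1) = L₂.take (t+1)) : likersAt L₁ t = likersAt L₂ t := by
  have h1 : (L₁.take (t+1)).getD t ∅ = (L₂.take (t+1)).getD t ∅ := by rw [h]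
  simpa [likersAt, List.getD_eq_getElem?_getD, List.getElem?_take, Nat.lt_succ_self] using h1

lemma matchedUpTo_congr (Alg : OnlineAlg A) {L₁ L₂ : List (Finset A)} (t : ℕ)
    (h : L₁.take t = L₂.take t) : matchedUpTo Alg L₁ t = matchedUpTo Alg L₂ t := by
  induction t with
  | zero => rfl
  | succ n ih =>
    have hn : L₁.take n = L₂.take n := take_of_take_succ h
    have hl : likersAt L₁ n = likersAt L₂ n := likersAt_congr h
    simp only [matchedUpTo, ih hn, hn, hl]

lemma assignAt_congr (Alg : OnlineAlg A) {L₁ L₂ : List (Finset A)} (t : ℕ)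
    (h : L₁.take (t+1) = L₂.take (t+1)) : assignAt Alg L₁ t = assignAt Alg L₂ t := by
  have hn : L₁.take t = L₂.take t := take_of_take_succ h
  have hl : likersAt L₁ t = likersAt L₂ t := likersAt_congr h
  simp only [assignAt, matchedUpTo_congr Alg t hn, hn, hl]

lemma matchedUpTo_succ (Alg : OnlineAlg A) (L : List (Finset A)) (t : ℕ) :
    matchedUpTo Alg L (t+1) =
      (assignAt Alg L t).elim (matchedUpTo Alg L t) (fun a => insert a (matchedUpTo Alg L t)) := by
  simp only [matchedUpTo, assignAt]
  cases hA : Alg (L.take t) (likersAt L t) with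
  | none => simp
  | some a =>
    by_cases hc : a ∈ likersAt L t ∧ a ∉ matchedUpTo Alg L t <;> simp [hc]

lemma step_some (Alg : OnlineAlg A) (hNW : NonWasteful Alg) (L : List (Finset A)) (t : ℕ)
    (ht : t < L.length) (a : A) (ha : a ∈ likersAt L t) (hm : a ∉ matchedUpTo Alg L t) :
    ∃ b, assignAt Alg L t = some b ∧ b ∈ likersAt L t ∧ b ∉ matchedUpTo Alg L t := by
  have h := hNW L t ht ⟨a, ha, hm⟩
  unfold assignAt at h ⊢
  cases hA : Alg (L.take t) (likersAt L t) with
  | none => rw [hA] at h; simp at h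
  | some b =>
    rw [hA] at h
    by_cases hc : b ∈ likersAt L t ∧ b ∉ matchedUpTo Alg L t
    · exact ⟨b, by simp [hc], hc.1, hc.2⟩
    · simp [hc] at h

end Helpers

lemma classItems_concrete (cf : Fin 6 → Fin 2) (Alg : OnlineAlg (Fin 6))
    (L : List (Finset (Fin 6))) (hlen : L.length = 4) (v0 v1 v2 v3 : Fin 6)
    (h0 : assignAt Alg L 0 = some v0) (h1 : assignAt Alg L 1 = some v1)
    (h2 : assignAt Alg L 2 = some v2) (h3 : assignAt Alg L 3 = some v3) (j : Fin 2) :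
    classItems cf Alg L j = (Finset.range 4).filter
      (fun t => cf ([v0, v1, v2, v3].getD t 0) = j) := by
  ext t
  simp only [classItems, hlen, Finset.mem_filter, Finset.mem_range, Finset.mem_univ, true_and]
  refine and_congr_right fun ht => ?_
  interval_cases t <;> simp [h0, h1, h2, h3]

lemma endgame (α : ℝ) (hα : α > 1/2) (cf : Fin 6 → Fin 2) (Alg : OnlineAlg (Fin 6))
    (hCEF : IsCEF1 cf α Alg) (L : List (Finset (Fin 6))) (hlen : L.length = 4)
    (v0 v1 v2 v3 : Fin 6) (i j : Fin 2)
    (h0 : assignAt Alg L 0 = some v0) (h1 : assignAt Alg L 1 = some v1)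
    (h2 : assignAt Alg L 2 = some v2) (h3 : assignAt Alg L 3 = some v3)
    (W : Finset ℕ)
    (hW : (Finset.range 4).filter (fun t => cf ([v0, v1, v2, v3].getD t 0) = j) = W)
    (hI : ((Finset.range 4).filter (fun t => cf ([v0, v1, v2, v3].getD t 0) = i)).card = 1)
    (hWne : W.Nonempty)
    (hV : ∀ t ∈ W, Vstar L (classAgents cf i) (W \ {t}) = 2) : False := by
  rcases hCEF L i j with hemp | ⟨t, ht, hineq⟩
  · rw [classItems_concrete cf Alg L hlen v0 v1 v2 v3 h0 h1 h2 h3 j, hW] at hemp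
    exact hWne.ne_empty hemp
  · rw [classItems_concrete cf Alg L hlen v0 v1 v2 v3 h0 h1 h2 h3 j, hW] at ht hineq
    rw [classItems_concrete cf Alg L hlen v0 v1 v2 v3 h0 h1 h2 h3 i, hI] at hineq
    rw [hV t ht] at hineq
    push_cast at hineq
    linarith

def L3 (s : Finset (Fin 6)) : List (Finset (Fin 6)) := [{0,3},{1,4},{2,5},s]


/-- Impossibility of `α`-CEF1 with non-wastefulness for `α > 1/2`: with six agents
partitioned into two classes of three (as in the instance with items `oᵢ` liked by
`aᵢ, bᵢ` and a final item liked only by `a₁, b₁`), no deterministic non-wasteful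
online algorithm for matching indivisible items is `α`-CEF1 for any `α > 1/2`. -/
theorem stmt_2 (α : ℝ) (hα : α > 1 / 2) :
    ¬ ∃ Alg : OnlineAlg (Fin 6),
      NonWasteful Alg ∧
      IsCEF1 (fun a : Fin 6 => if (a : ℕ) < 3 then (0 : Fin 2) else 1) α Alg := by
  rintro ⟨Alg, hNW, hCEF⟩
  obtain ⟨a0, h0, ha0, -⟩ := step_some Alg hNW (L3 {0,3}) 0 (by decide) 0 (by decide)
    (by simp [matchedUpTo])
  have ha0' : a0 ∈ ({0, 3} : Finset (Fin 6)) := ha0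
  have m1 : matchedUpTo Alg (L3 {0,3}) 1 = {a0} := by rw [matchedUpTo_succ, h0]; rfl
  obtain ⟨a1, h1, ha1, -⟩ := step_some Alg hNW (L3 {0,3}) 1 (by decide) 1 (by decide)
    (by rw [m1]; fin_cases ha0' <;> decide)
  have ha1' : a1 ∈ ({1, 4} : Finset (Fin 6)) := ha1
  have m2 : matchedUpTo Alg (L3 {0,3}) 2 = insert a1 {a0} := by rw [matchedUpTo_succ, h1, m1]; rfl
  obtain ⟨a2, h2, ha2, -⟩ := step_some Alg hNW (L3 {0,3}) 2 (by decide) 2 (by decide)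
    (by rw [m2]; fin_cases ha0' <;> fin_cases ha1' <;> decide)
  have ha2' : a2 ∈ ({2, 5} : Finset (Fin 6)) := ha2
  have m3 : matchedUpTo Alg (L3 {0,3}) 3 = insert a2 (insert a1 {a0}) := by
    rw [matchedUpTo_succ, h2, m2]; rfl
  clear ha0 ha1 ha2 m1 m2
  fin_cases ha0' <;> fin_cases ha1' <;> fin_cases ha2'
  · have h0' := (assignAt_congr Alg 0 (rfl : (L3 {0,3}).take 1 = (L3 {0,3}).take 1)).trans h0
    have h1' := (assignAt_congr Alg 1 (rfl : (L3 {0,3}).take 2 = (L3 {0,3}).take 2)).trans h1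
    have h2' := (assignAt_congr Alg 2 (rfl : (L3 {0,3}).take 3 = (L3 {0,3}).take 3)).trans h2
    have m3' := (matchedUpTo_congr Alg 3 (rfl : (L3 {0,3}).take 3 = (L3 {0,3}).take 3)).trans m3
    obtain ⟨b, h3, hb, hbm⟩ := step_some Alg hNW (L3 {0,3}) 3 (by decide) 3 (by decide)
      (by rw [m3']; decide)
    rw [m3'] at hbm
    have hb' : b ∈ ({0,3} : Finset (Fin 6)) := hb
    fin_cases hb'
    · exact hbm (by decide)
    · exact endgame α hα _ Alg hCEF (L3 {0,3}) rfl _ _ _ 3 1 0 h0' h1' h2' h3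
        {0,1,2} (by decide) (by decide) (by decide) (by decide)
  · have h0' := (assignAt_congr Alg 0 (rfl : (L3 {2,5}).take 1 = (L3 {0,3}).take 1)).trans h0
    have h1' := (assignAt_congr Alg 1 (rfl : (L3 {2,5}).take 2 = (L3 {0,3}).take 2)).trans h1
    have h2' := (assignAt_congr Alg 2 (rfl : (L3 {2,5}).take 3 = (L3 {0,3}).take 3)).trans h2
    have m3' := (matchedUpTo_congr Alg 3 (rfl : (L3 {2,5}).take 3 = (L3 {0,3}).take 3)).trans m3
    obtain ⟨b, h3, hb, hbm⟩ := step_some Alg hNW (L3 {2,5}) 3 (by decide) 2 (by decide)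
      (by rw [m3']; decide)
    rw [m3'] at hbm
    have hb' : b ∈ ({2,5} : Finset (Fin 6)) := hb
    fin_cases hb'
    · exact endgame α hα _ Alg hCEF (L3 {2,5}) rfl _ _ _ 2 1 0 h0' h1' h2' h3
        {0,1,3} (by decide) (by decide) (by decide) (by decide)
    · exact hbm (by decide)
  · have h0' := (assignAt_congr Alg 0 (rfl : (L3 {1,4}).take 1 = (L3 {0,3}).take 1)).trans h0
    have h1' := (assignAt_congr Alg 1 (rfl : (L3 {1,4}).take 2 = (L3 {0,3}).take 2)).trans h1
    have h2' := (assignAt_congr Alg 2 (rfl : (L3 {1,4}).take 3 = (L3 {0,3}).take 3)).trans h2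
    have m3' := (matchedUpTo_congr Alg 3 (rfl : (L3 {1,4}).take 3 = (L3 {0,3}).take 3)).trans m3
    obtain ⟨b, h3, hb, hbm⟩ := step_some Alg hNW (L3 {1,4}) 3 (by decide) 1 (by decide)
      (by rw [m3']; decide)
    rw [m3'] at hbm
    have hb' : b ∈ ({1,4} : Finset (Fin 6)) := hb
    fin_cases hb'
    · exact endgame α hα _ Alg hCEF (L3 {1,4}) rfl _ _ _ 1 1 0 h0' h1' h2' h3
        {0,2,3} (by decide) (by decide) (by decide) (by decide)
    · exact hbm (by decide)
  · have h0' := (assignAt_congr Alg 0 (rfl : (L3 {0,3}).take 1 = (L3 {0,3}).take 1)).trans h0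
    have h1' := (assignAt_congr Alg 1 (rfl : (L3 {0,3}).take 2 = (L3 {0,3}).take 2)).trans h1
    have h2' := (assignAt_congr Alg 2 (rfl : (L3 {0,3}).take 3 = (L3 {0,3}).take 3)).trans h2
    have m3' := (matchedUpTo_congr Alg 3 (rfl : (L3 {0,3}).take 3 = (L3 {0,3}).take 3)).trans m3
    obtain ⟨b, h3, hb, hbm⟩ := step_some Alg hNW (L3 {0,3}) 3 (by decide) 3 (by decide)
      (by rw [m3']; decide)
    rw [m3'] at hbm
    have hb' : b ∈ ({0,3} : Finset (Fin 6)) := hb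
    fin_cases hb'
    · exact hbm (by decide)
    · exact endgame α hα _ Alg hCEF (L3 {0,3}) rfl _ _ _ 3 0 1 h0' h1' h2' h3
        {1,2,3} (by decide) (by decide) (by decide) (by decide)
  · have h0' := (assignAt_congr Alg 0 (rfl : (L3 {0,3}).take 1 = (L3 {0,3}).take 1)).trans h0
    have h1' := (assignAt_congr Alg 1 (rfl : (L3 {0,3}).take 2 = (L3 {0,3}).take 2)).trans h1
    have h2' := (assignAt_congr Alg 2 (rfl : (L3 {0,3}).take 3 = (L3 {0,3}).take 3)).trans h2
    have m3' := (matchedUpTo_congr Alg 3 (rfl : (L3 {0,3}).take 3 = (L3 {0,3}).take 3)).trans m3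
    obtain ⟨b, h3, hb, hbm⟩ := step_some Alg hNW (L3 {0,3}) 3 (by decide) 0 (by decide)
      (by rw [m3']; decide)
    rw [m3'] at hbm
    have hb' : b ∈ ({0,3} : Finset (Fin 6)) := hb
    fin_cases hb'
    · exact endgame α hα _ Alg hCEF (L3 {0,3}) rfl _ _ _ 0 1 0 h0' h1' h2' h3
        {1,2,3} (by decide) (by decide) (by decide) (by decide)
    · exact hbm (by decide)
  · have h0' := (assignAt_congr Alg 0 (rfl : (L3 {1,4}).take 1 = (L3 {0,3}).take 1)).trans h0
    have h1' := (assignAt_congr Alg 1 (rfl : (L3 {1,4}).take 2 = (L3 {0,3}).take 2)).trans h1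
    have h2' := (assignAt_congr Alg 2 (rfl : (L3 {1,4}).take 3 = (L3 {0,3}).take 3)).trans h2
    have m3' := (matchedUpTo_congr Alg 3 (rfl : (L3 {1,4}).take 3 = (L3 {0,3}).take 3)).trans m3
    obtain ⟨b, h3, hb, hbm⟩ := step_some Alg hNW (L3 {1,4}) 3 (by decide) 4 (by decide)
      (by rw [m3']; decide)
    rw [m3'] at hbm
    have hb' : b ∈ ({1,4} : Finset (Fin 6)) := hb
    fin_cases hb'
    · exact hbm (by decide)
    · exact endgame α hα _ Alg hCEF (L3 {1,4}) rfl _ _ _ 4 0 1 h0' h1' h2' h3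
        {0,2,3} (by decide) (by decide) (by decide) (by decide)
  · have h0' := (assignAt_congr Alg 0 (rfl : (L3 {2,5}).take 1 = (L3 {0,3}).take 1)).trans h0
    have h1' := (assignAt_congr Alg 1 (rfl : (L3 {2,5}).take 2 = (L3 {0,3}).take 2)).trans h1
    have h2' := (assignAt_congr Alg 2 (rfl : (L3 {2,5}).take 3 = (L3 {0,3}).take 3)).trans h2
    have m3' := (matchedUpTo_congr Alg 3 (rfl : (L3 {2,5}).take 3 = (L3 {0,3}).take 3)).trans m3
    obtain ⟨b, h3, hb, hbm⟩ := step_some Alg hNW (L3 {2,5}) 3 (by decide) 5 (by decide)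
      (by rw [m3']; decide)
    rw [m3'] at hbm
    have hb' : b ∈ ({2,5} : Finset (Fin 6)) := hb
    fin_cases hb'
    · exact hbm (by decide)
    · exact endgame α hα _ Alg hCEF (L3 {2,5}) rfl _ _ _ 5 0 1 h0' h1' h2' h3
        {0,1,3} (by decide) (by decide) (by decide) (by decide)
  · have h0' := (assignAt_congr Alg 0 (rfl : (L3 {0,3}).take 1 = (L3 {0,3}).take 1)).trans h0
    have h1' := (assignAt_congr Alg 1 (rfl : (L3 {0,3}).take 2 = (L3 {0,3}).take 2)).trans h1
    have h2' := (assignAt_congr Alg 2 (rfl : (L3 {0,3}).take 3 = (L3 {0,3}).take 3)).trans h2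
    have m3' := (matchedUpTo_congr Alg 3 (rfl : (L3 {0,3}).take 3 = (L3 {0,3}).take 3)).trans m3
    obtain ⟨b, h3, hb, hbm⟩ := step_some Alg hNW (L3 {0,3}) 3 (by decide) 0 (by decide)
      (by rw [m3']; decide)
    rw [m3'] at hbm
    have hb' : b ∈ ({0,3} : Finset (Fin 6)) := hb
    fin_cases hb'
    · exact endgame α hα _ Alg hCEF (L3 {0,3}) rfl _ _ _ 0 0 1 h0' h1' h2' h3
        {0,1,2} (by decide) (by decide) (by decide) (by decide)
    · exact hbm (by decide)
end

section
/- There exists an instance (with 2 classes of 3 agents each and 4 items) on which every deterministic non-wasteful online matching algorithm outputs a matching X with V₁(X) = 1 while mms₁ ≥ 2, where class 1 is the class receiving fewer items; hence no deterministic online algorithm (even wasteful) achieves α-CMMS for any α > 1/2. -/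
/-!
Two items liked by everybody arrive first. If nothing else arrives, each class has maximin
share 1, so an `α`-CMMS algorithm with `α > 0` must give these items to agents `a`, `b` of
different classes. The adversary then sends two items liked only by `a` and `b`: they cannot be
matched, so the class of `a` keeps a single item, while its maximin share is now 2 (swap the
first item to a classmate of `a` and give a late item to `a`).
-/

open Finset

variable {A : Type*} [Fintype A] [DecidableEq A] {k : ℕ}

lemma likersAt_eq_of_take_eq {A : Type*} {L L' : List (Finset A)} {t : ℕ}
    (h : L.take (t + 1) = L'.take (t + 1)) : likersAt L t = likersAt L' t := by
  have := congrArg (fun l => l.getD t ∅) h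
  simpa [likersAt, List.getD_eq_getElem?_getD, List.getElem?_take] using this

lemma Vstar_le_card_mul_card {A : Type*} [DecidableEq A] (L : List (Finset A)) (C : Finset A)
    (S : Finset ℕ) : Vstar L C S ≤ #S * #C :=
  (card_product S C).symm ▸ Finset.sup_le fun _ hP =>
    card_le_card (mem_powerset.1 (mem_filter.1 hP).1)

section OnlineMatching

variable {A : Type*} [DecidableEq A] (Alg : OnlineAlg A) (L : List (Finset A))

lemma matchedUpTo_succ_eq (t : ℕ) :
    matchedUpTo Alg L (t + 1) =
      (assignAt Alg L t).elim (matchedUpTo Alg L t) (insert · (matchedUpTo Alg L t)) := by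
  rw [matchedUpTo, assignAt]
  cases Alg (L.take t) (likersAt L t) with
  | none => rfl
  | some a => by_cases h : a ∈ likersAt L t ∧ a ∉ matchedUpTo Alg L t <;> simp [h]

lemma mem_matchedUpTo {t : ℕ} {x : A} :
    x ∈ matchedUpTo Alg L t ↔ ∃ s < t, assignAt Alg L s = some x := by
  induction t with
  | zero => simp [matchedUpTo]
  | succ t ih =>
    rw [matchedUpTo_succ_eq, Nat.exists_lt_succ_right, ← ih]
    cases assignAt Alg L t with
    | none => simp
    | some a => simp [or_comm, eq_comm]

lemma assignAt_eq_none_of_forall_assigned {t : ℕ}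
    (h : ∀ x ∈ likersAt L t, ∃ s < t, assignAt Alg L s = some x) :
    assignAt Alg L t = none := by
  unfold assignAt
  cases Alg (L.take t) (likersAt L t) with
  | none => rfl
  | some a => exact if_neg fun ⟨ha, hnot⟩ => hnot ((mem_matchedUpTo Alg L).2 (h a ha))

variable {L} {L' : List (Finset A)}

lemma matchedUpTo_eq_of_take_eq {t : ℕ} (h : L.take t = L'.take t) :
    matchedUpTo Alg L t = matchedUpTo Alg L' t := by
  induction t with
  | zero => rfl
  | succ t ih =>
    have ht : L.take t = L'.take t := by
      simpa [List.take_take] using congrArg (List.take t) h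
    simp only [matchedUpTo, ht, ih ht, likersAt_eq_of_take_eq h]

lemma assignAt_eq_of_take_eq {t : ℕ} (h : L.take (t + 1) = L'.take (t + 1)) :
    assignAt Alg L t = assignAt Alg L' t := by
  have ht : L.take t = L'.take t := by
    simpa [List.take_take] using congrArg (List.take t) h
  simp only [assignAt, ht, matchedUpTo_eq_of_take_eq Alg ht, likersAt_eq_of_take_eq h]

end OnlineMatching

section ClassValuations

variable {A : Type*} [Fintype A] [DecidableEq A] {k : ℕ} {classOf : A → Fin k}
  {Alg : OnlineAlg A} {L : List (Finset A)}

lemma mem_classItems {j : Fin k} {t : ℕ} :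
    t ∈ classItems classOf Alg L j ↔
      t < L.length ∧ ∃ a, assignAt Alg L t = some a ∧ classOf a = j := by
  simp [classItems]

lemma le_mmsShare [NeZero k] {i : Fin k} {v : ℕ} (X : Finset (ℕ × A))
    (hX : X ⊆ range L.length ×ˢ univ) (hlike : ∀ p ∈ X, p.2 ∈ likersAt L p.1)
    (hmatch : IsPartialMatching X)
    (hv : ∀ j, v ≤ Vstar L (classAgents classOf i)
      ((X.filter fun p => classOf p.2 = j).image Prod.fst)) :
    v ≤ mmsShare classOf L i := by
  refine le_csSup ⟨L.length * Fintype.card A, ?_⟩ ⟨X, mem_powerset.2 hX, hlike, hmatch, hv⟩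
  rintro w ⟨Y, hY, -, -, hw⟩
  refine (hw 0).trans ((Vstar_le_card_mul_card _ _ _).trans (Nat.mul_le_mul ?_ (card_le_univ _)))
  refine (card_le_card (image_subset_iff.2 fun p hp => ?_)).trans (card_range _).le
  exact (mem_product.1 (mem_powerset.1 hY (filter_subset _ _ hp))).1

lemma IsCMMS.classItems_nonempty {α : ℝ} (h : IsCMMS classOf α Alg) (hα : 0 < α) {i : Fin k}
    (hmms : 0 < mmsShare classOf L i) : (classItems classOf Alg L i).Nonempty := by
  rw [← card_pos, ← Nat.cast_pos (α := ℝ)]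
  exact lt_of_lt_of_le (mul_pos hα (Nat.cast_pos.2 hmms)) (h L i)

end ClassValuations

section TwoClasses

variable {A : Type*} [Fintype A] [DecidableEq A] {classOf : A → Fin 2} {Alg : OnlineAlg A}
  {L : List (Finset A)}

lemma exists_assignAt_zero_one_of_classItems_nonempty
    (hL : ∀ t, 2 ≤ t → likersAt L t = ∅) (h₀ : (classItems classOf Alg L 0).Nonempty)
    (h₁ : (classItems classOf Alg L 1).Nonempty) :
    ∃ a b, assignAt Alg L 0 = some a ∧ assignAt Alg L 1 = some b ∧ classOf a ≠ classOf b := by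
  have assigned_lt_two : ∀ t a, assignAt Alg L t = some a → t < 2 := fun t a ha => by
    by_contra! ht
    rw [assignAt_eq_none_of_forall_assigned Alg L (by simp [hL t ht])] at ha
    cases ha
  obtain ⟨t₀, ht₀⟩ := h₀
  obtain ⟨t₁, ht₁⟩ := h₁
  obtain ⟨-, a₀, ha₀, hc₀⟩ := mem_classItems.1 ht₀
  obtain ⟨-, a₁, ha₁, hc₁⟩ := mem_classItems.1 ht₁
  have hne : t₀ ≠ t₁ := by
    rintro rfl
    obtain rfl : a₀ = a₁ := Option.some_injective _ (ha₀.symm.trans ha₁)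
    exact absurd (hc₀.symm.trans hc₁) (by decide)
  have := assigned_lt_two _ _ ha₀
  have := assigned_lt_two _ _ ha₁
  obtain ⟨rfl, rfl⟩ | ⟨rfl, rfl⟩ : (t₀ = 0 ∧ t₁ = 1) ∨ (t₀ = 1 ∧ t₁ = 0) := by omega
  · exact ⟨a₀, a₁, ha₀, ha₁, by rw [hc₀, hc₁]; decide⟩
  · exact ⟨a₁, a₀, ha₁, ha₀, by rw [hc₀, hc₁]; decide⟩

lemma classItems_subset_singleton_zero {a b : A} (ha : assignAt Alg L 0 = some a)
    (hb : assignAt Alg L 1 = some b) (hab : classOf a ≠ classOf b)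
    (hL : ∀ t, 2 ≤ t → likersAt L t ⊆ {a, b}) :
    classItems classOf Alg L (classOf a) ⊆ {0} := by
  intro t ht
  obtain ⟨-, x, hx, hcx⟩ := mem_classItems.1 ht
  obtain rfl | rfl | ht2 : t = 0 ∨ t = 1 ∨ 2 ≤ t := by omega
  · exact mem_singleton_self 0
  · obtain rfl : b = x := Option.some_injective _ (hb.symm.trans hx)
    exact absurd hcx.symm hab
  · have hnone : assignAt Alg L t = none := by
      refine assignAt_eq_none_of_forall_assigned Alg L fun y hy => ?_
      rcases mem_insert.1 (hL t ht2 hy) with rfl | hy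
      · exact ⟨0, by omega, ha⟩
      · exact ⟨1, by omega, (mem_singleton.1 hy) ▸ hb⟩
    rw [hnone] at hx
    cases hx

end TwoClasses

def twoCommonItems {A : Type*} [Fintype A] (S : Finset A) : List (Finset A) :=
  [univ, univ, S, S]

lemma likersAt_twoCommonItems_subset {A : Type*} [Fintype A] (S : Finset A) {t : ℕ}
    (ht : 2 ≤ t) : likersAt (twoCommonItems S) t ⊆ S := by
  match t, ht with
  | 2, _ | 3, _ => exact subset_rfl
  | t + 4, _ => simp [likersAt, twoCommonItems]

def halves (a : Fin 6) : Fin 2 := if (a : ℕ) < 3 then 0 else 1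

def classmate (a : Fin 6) : Fin 6 :=
  if a = 0 then 1 else if (a : ℕ) < 3 then 0 else if a = 3 then 4 else 3

lemma one_le_mmsShare_halves_twoCommonItems_empty (i : Fin 2) :
    1 ≤ mmsShare halves (twoCommonItems (∅ : Finset (Fin 6))) i := by
  refine le_mmsShare {(0, 0), (1, 3)} (by decide) (by decide) (by decide) ?_
  fin_cases i <;> decide

/-- The class of `a` gets items `0, 2` (to `classmate a` and `a`) and the class of `b` gets
items `1, 3`; the class of `a` values each bundle at 2, by giving the late item to `a`. -/
lemma two_le_mmsShare_halves_twoCommonItems {a b : Fin 6} (hab : halves a ≠ halves b) :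
    2 ≤ mmsShare halves (twoCommonItems {a, b}) (halves a) := by
  refine le_mmsShare {(0, classmate a), (1, classmate b), (2, a), (3, b)} ?_ ?_ ?_ ?_ <;>
    fin_cases a <;> fin_cases b <;> revert hab <;> decide

/-- Impossibility of `α`-CMMS for `α > 1/2`: with six agents partitioned into two
classes of three (the adversarial instance has four items), no deterministic online
algorithm for matching indivisible items — wasteful or not — is `α`-CMMS for any
`α > 1/2`. -/
theorem stmt_3 (α : ℝ) (hα : α > 1 / 2) :
    ¬ ∃ Alg : OnlineAlg (Fin 6),
      IsCMMS (fun a : Fin 6 => if (a : ℕ) < 3 then (0 : Fin 2) else 1) α Alg := by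
  rintro ⟨Alg, hAlg⟩
  change IsCMMS halves α Alg at hAlg
  have hα₀ : 0 < α := by linarith
  -- With no late items, both classes must be served, so the two common items are split.
  obtain ⟨a, b, ha, hb, hab⟩ := exists_assignAt_zero_one_of_classItems_nonempty
    (fun t ht => subset_empty.1 (likersAt_twoCommonItems_subset (∅ : Finset (Fin 6)) ht))
    (hAlg.classItems_nonempty hα₀ (one_le_mmsShare_halves_twoCommonItems_empty 0))
    (hAlg.classItems_nonempty hα₀ (one_le_mmsShare_halves_twoCommonItems_empty 1))
  -- The algorithm splits them the same way when the late items are liked only by `a` and `b`.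
  have ha' : assignAt Alg (twoCommonItems {a, b}) 0 = some a :=
    (assignAt_eq_of_take_eq Alg rfl).symm.trans ha
  have hb' : assignAt Alg (twoCommonItems {a, b}) 1 = some b :=
    (assignAt_eq_of_take_eq Alg rfl).symm.trans hb
  have hcard : #(classItems halves Alg (twoCommonItems {a, b}) (halves a)) ≤ 1 :=
    card_le_one_iff_subset_singleton.2
      ⟨0, classItems_subset_singleton_zero ha' hb' hab fun _ => likersAt_twoCommonItems_subset _⟩
  have : α * 2 ≤ 1 := calc
      α * 2 ≤ α * mmsShare halves (twoCommonItems {a, b}) (halves a) := by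
        gcongr; exact_mod_cast two_le_mmsShare_halves_twoCommonItems hab
      _ ≤ #(classItems halves Alg (twoCommonItems {a, b}) (halves a)) := hAlg _ _
      _ ≤ 1 := by exact_mod_cast hcard
  linarith
end

section
/- For a nonincreasing, nonnegative, integrable function f on [0,1], if a real number P satisfies P ≤ ∫₀^θ f(z) dz + f(θ) for all θ ∈ (0,1], then (1 − 1/e)·P ≤ ∫₀¹ f(z) dz. -/
/-!
Write `A θ = ∫ z in a..θ, f z`. The function `θ ↦ exp (θ - b) * A θ` is absolutely
continuous with derivative `exp (θ - b) * (A θ + f θ)` almost everywhere (Lebesgue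
differentiation), so its derivative integrates to `A b`. Integrating `P ≤ A θ + f θ` against
the weight `exp (θ - b)`, whose mass is `1 - exp (a - b)`, therefore gives the bound.
-/

open MeasureTheory Set Real

theorem integral_exp_sub_mul_primitive_add {f : ℝ → ℝ} {a b : ℝ}
    (hf : IntervalIntegrable f volume a b) :
    ∫ θ in a..b, exp (θ - b) * ((∫ z in a..θ, f z) + f θ) = ∫ z in a..b, f z := by
  have hexp : AbsolutelyContinuousOnInterval (fun θ ↦ exp (θ - b)) a b :=
    (by fun_prop : ContDiff ℝ 1 fun θ ↦ exp (θ - b)).contDiffOn.absolutelyContinuousOnInterval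
  have hprim := hf.absolutelyContinuousOnInterval_intervalIntegral (c := a) left_mem_uIcc
  calc ∫ θ in a..b, exp (θ - b) * ((∫ z in a..θ, f z) + f θ)
      = ∫ θ in a..b, deriv (fun θ ↦ exp (θ - b)) θ * (∫ z in a..θ, f z) +
          exp (θ - b) * deriv (fun θ ↦ ∫ z in a..θ, f z) θ := by
        refine intervalIntegral.integral_congr_ae ?_
        filter_upwards [hf.ae_hasDerivAt_integral] with θ hθ hθab
        rw [(hθ (uIoc_subset_uIcc hθab) a left_mem_uIcc).deriv,
          ((hasDerivAt_id' θ).sub_const b).exp.deriv]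
        ring
    _ = exp (b - b) * (∫ z in a..b, f z) - exp (a - b) * ∫ z in a..a, f z :=
        hexp.integral_deriv_mul_eq_sub hprim
    _ = ∫ z in a..b, f z := by simp

theorem one_sub_exp_sub_mul_le_integral {f : ℝ → ℝ} {a b P : ℝ} (hab : a ≤ b)
    (hf : IntervalIntegrable f volume a b)
    (hP : ∀ θ ∈ Ioo a b, P ≤ (∫ z in a..θ, f z) + f θ) :
    (1 - exp (a - b)) * P ≤ ∫ z in a..b, f z := by
  have hweight : ∫ θ in a..b, exp (θ - b) = 1 - exp (a - b) := by
    rw [intervalIntegral.integral_comp_sub_right exp, integral_exp, sub_self, exp_zero]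
  have hprim : ContinuousOn (fun θ ↦ ∫ z in a..θ, f z) (uIcc a b) :=
    (hf.absolutelyContinuousOnInterval_intervalIntegral left_mem_uIcc).continuousOn
  calc (1 - exp (a - b)) * P = ∫ θ in a..b, exp (θ - b) * P := by
        rw [intervalIntegral.integral_mul_const, hweight]
    _ ≤ ∫ θ in a..b, exp (θ - b) * ((∫ z in a..θ, f z) + f θ) := by
        refine intervalIntegral.integral_mono_on_of_le_Ioo hab
          ((by fun_prop : Continuous fun θ ↦ exp (θ - b) * P).intervalIntegrable a b)
          ((hprim.intervalIntegrable.add hf).continuousOn_mul (by fun_prop)) fun θ hθ ↦ ?_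
        exact mul_le_mul_of_nonneg_left (hP θ hθ) (exp_nonneg _)
    _ = ∫ z in a..b, f z := integral_exp_sub_mul_primitive_add hf

theorem stmt_8_general (f : ℝ → ℝ)
    (hint : IntervalIntegrable f volume 0 1)
    (P : ℝ)
    (hP : ∀ θ ∈ Set.Ioc (0 : ℝ) 1, P ≤ (∫ z in (0 : ℝ)..θ, f z) + f θ) :
    (1 - 1 / Real.exp 1) * P ≤ ∫ z in (0 : ℝ)..1, f z := by
  have h := one_sub_exp_sub_mul_le_integral zero_le_one hint
    fun θ hθ ↦ hP θ (Ioo_subset_Ioc_self hθ)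
  rwa [zero_sub, exp_neg, inv_eq_one_div] at h

/-- Analytic core of the `(1 − 1/e)` water-filling analysis: if `f` is nonincreasing,
nonnegative and integrable on `[0,1]`, and `P ≤ ∫₀^θ f + f(θ)` for all `θ ∈ (0,1]`,
then `(1 − 1/e) · P ≤ ∫₀¹ f`. -/
theorem stmt_8 (f : ℝ → ℝ)
    (hmono : AntitoneOn f (Set.Icc 0 1))
    (hpos : ∀ z ∈ Set.Icc (0 : ℝ) 1, 0 ≤ f z)
    (hint : IntervalIntegrable f volume 0 1)
    (P : ℝ)
    (hP : ∀ θ ∈ Set.Ioc (0 : ℝ) 1, P ≤ (∫ z in (0 : ℝ)..θ, f z) + f θ) :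
    (1 - 1 / Real.exp 1) * P ≤ ∫ z in (0 : ℝ)..1, f z :=
  stmt_8_general f hint P hP
end

section
/- Let p(x) = 1 − exp(−x − x²/2 − ((4−2√3)/3)·x³), and let c(θ) = −e^θ ∫_θ^∞ p''(y) e^{−y} dy for θ > 0. Then for all z > 0, ∫_z^∞ c(θ) dθ + c(z) = p'(z), and ∫_0^∞ c(θ) dθ > 0.593. -/
/-!
Write `F(θ) = e^θ ∫_θ^∞ p'(y) e^{-y} dy`. Integrating by parts turns the definition of `c` into
`c = p' - F`, while `F' = F - p'` and `F → 0` at infinity; hence `∫_z^∞ c = F(z)`, which is the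
identity. With `φ(y) = 2y + y²/2 + κy³`, so that `p(y) = 1 - e^{y - φ(y)}`, one has
`p'(y) e^{-y} = (φ'(y) - 1) e^{-φ(y)}`, whence `∫_0^∞ c = F(0) = 1 - ∫_0^∞ e^{-φ}`. Lowering `κ`
to `5/28` only increases the last integral, and then `e^{-φ}` is convex: the trapezoid rule with
step `1/20` on `[0, 2]`, the tangent of `φ` at `2` on the tail, and `e^{-x} ≤ 1 / ∑_{i ≤ 12} xⁱ/i!`
at the nodes bound it by `0.407`.
-/

open MeasureTheory

/-- The multiway semi-OCS probability function. -/
noncomputable def ocsP (x : ℝ) : ℝ :=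
  1 - Real.exp (-x - x ^ 2 / 2 - ((4 - 2 * Real.sqrt 3) / 3) * x ^ 3)

/-- The amortization coefficients used in the analysis of Equal-Filling-OCS. -/
noncomputable def ocsC (θ : ℝ) : ℝ :=
  -(Real.exp θ * ∫ y in Set.Ioi θ, deriv (deriv ocsP) y * Real.exp (-y))

open Set Filter Topology Real

theorem integrableOn_Ioi_of_abs_le_exp_neg {g : ℝ → ℝ} {a C : ℝ} (hg : ContinuousOn g (Ici a))
    (hC : ∀ y ≥ a, |g y| ≤ C * exp (-y)) : IntegrableOn g (Ioi a) := by
  refine Integrable.mono' ((integrableOn_exp_neg_Ioi a).const_mul C)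
    ((hg.mono Ioi_subset_Ici_self).aestronglyMeasurable measurableSet_Ioi) ?_
  filter_upwards [self_mem_ae_restrict measurableSet_Ioi] with y hy
  exact hC y (le_of_lt hy)

theorem tendsto_zero_of_abs_le_exp_neg {g : ℝ → ℝ} {a C : ℝ}
    (hC : ∀ y ≥ a, |g y| ≤ C * exp (-y)) : Tendsto g atTop (𝓝 0) := by
  refine squeeze_zero_norm' ?_ (by simpa using tendsto_exp_neg_atTop_nhds_zero.const_mul C)
  filter_upwards [eventually_ge_atTop a] with y hy using hC y hy

theorem exp_neg_le_one_div_sum {x : ℝ} (hx : 0 ≤ x) (n : ℕ) :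
    exp (-x) ≤ 1 / ∑ i ∈ Finset.range (n + 1), x ^ i / i.factorial := by
  have hpos : 0 < ∑ i ∈ Finset.range (n + 1), x ^ i / i.factorial :=
    Finset.sum_pos' (fun i _ => by positivity) ⟨0, by simp⟩
  rw [exp_neg, ← one_div]
  exact one_div_le_one_div_of_le hpos (sum_le_exp_of_nonneg hx _)

theorem integral_Ioi_exp_neg_le_of_tangent {f : ℝ → ℝ} {A β : ℝ} (hf : Continuous f)
    (hβ : 0 < β) (htangent : ∀ y ≥ A, f A + β * (y - A) ≤ f y) :
    ∫ y in Ioi A, exp (-f y) ≤ exp (-f A) / β := by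
  have hline : IntegrableOn (fun y => exp (β * A - f A) * exp (-β * y)) (Ioi A) :=
    (integrableOn_exp_mul_Ioi (neg_lt_zero.2 hβ) A).const_mul _
  have hle : ∀ y ∈ Ioi A, exp (-f y) ≤ exp (β * A - f A) * exp (-β * y) := fun y hy => by
    rw [← exp_add, exp_le_exp]
    linarith [htangent y (le_of_lt hy)]
  have hint : IntegrableOn (fun y => exp (-f y)) (Ioi A) := by
    refine Integrable.mono' hline (by fun_prop) ?_
    filter_upwards [self_mem_ae_restrict measurableSet_Ioi] with y hy
    rw [norm_of_nonneg (exp_pos _).le]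
    exact hle y hy
  calc ∫ y in Ioi A, exp (-f y) ≤ ∫ y in Ioi A, exp (β * A - f A) * exp (-β * y) :=
        setIntegral_mono_on hint hline measurableSet_Ioi hle
    _ = exp (-f A) / β := by
        rw [integral_const_mul, integral_exp_mul_Ioi (neg_lt_zero.2 hβ), neg_div_neg_eq,
          mul_div_assoc', ← exp_add]
        ring_nf

theorem integral_Ioi_deriv_mul_exp_neg {φ φ' : ℝ → ℝ} {a : ℝ}
    (hφ : ∀ y ∈ Ici a, HasDerivAt φ (φ' y) y) (hφ' : ∀ y ∈ Ioi a, 0 ≤ φ' y)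
    (hφtop : Tendsto φ atTop atTop) :
    IntegrableOn (fun y => φ' y * exp (-φ y)) (Ioi a) ∧
      ∫ y in Ioi a, φ' y * exp (-φ y) = exp (-φ a) := by
  have hderiv : ∀ y ∈ Ici a, HasDerivAt (fun y => -exp (-φ y)) (φ' y * exp (-φ y)) y :=
    fun y hy => ((hφ y hy).neg.exp.neg).congr_deriv (by simp [mul_comm])
  have hnonneg : ∀ y ∈ Ioi a, 0 ≤ φ' y * exp (-φ y) := fun y hy =>
    mul_nonneg (hφ' y hy) (exp_pos _).le
  have hlim : Tendsto (fun y => -exp (-φ y)) atTop (𝓝 (-0)) :=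
    (tendsto_exp_neg_atTop_nhds_zero.comp hφtop).neg
  refine ⟨integrableOn_Ioi_deriv_of_nonneg' hderiv hnonneg hlim, ?_⟩
  rw [integral_Ioi_of_hasDerivAt_of_nonneg' hderiv hnonneg hlim]
  ring

theorem ConvexOn.integral_le_trapezoid {f : ℝ → ℝ} {a b : ℝ} (hab : a ≤ b)
    (hf : ConvexOn ℝ (Icc a b) f) (hfi : IntervalIntegrable f volume a b) :
    ∫ x in a..b, f x ≤ (b - a) * (f a + f b) / 2 := by
  rcases hab.eq_or_lt with rfl | hlt
  · simp
  have hba : 0 < b - a := sub_pos.2 hlt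
  set s := (f b - f a) / (b - a)
  have hsecant : ∀ x ∈ Icc a b, f x ≤ f a + s * (x - a) := by
    intro x hx
    rcases hx.1.eq_or_lt with rfl | hax
    · simp
    rcases hx.2.eq_or_lt with rfl | hxb
    · simp only [s]; field_simp; linarith
    have h := hf.secant_mono_aux1 (left_mem_Icc.2 hab) (right_mem_Icc.2 hab) hax hxb
    rw [← sub_nonneg] at h ⊢
    have : 0 ≤ (b - a) * (f a + s * (x - a) - f x) := by
      simp only [s]; field_simp; linarith
    exact nonneg_of_mul_nonneg_right (by linarith) hba
  have hline : ∀ x ∈ uIcc a b, HasDerivAt (fun x => f a * x + s * (x - a) ^ 2 / 2)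
      (f a + s * (x - a)) x := fun x _ => by
    have h := ((hasDerivAt_id' x).const_mul (f a)).add
      ((((hasDerivAt_id' x).sub_const a).pow 2).const_mul s |>.div_const 2)
    exact h.congr_deriv (by norm_num; ring)
  calc ∫ x in a..b, f x ≤ ∫ x in a..b, (f a + s * (x - a)) :=
        intervalIntegral.integral_mono_on hab hfi
          ((by fun_prop : Continuous _).intervalIntegrable _ _) hsecant
    _ = (b - a) * (f a + f b) / 2 := by
        rw [intervalIntegral.integral_eq_sub_of_hasDerivAt hline
          ((by fun_prop : Continuous _).intervalIntegrable _ _)]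
        simp only [s]; field_simp; ring

theorem ConvexOn.integral_le_trapezoid_sum {f : ℝ → ℝ} {h : ℝ} (hh : 0 ≤ h) (n : ℕ)
    (hf : ConvexOn ℝ (Icc 0 (n * h)) f) (hfi : IntervalIntegrable f volume 0 (n * h)) :
    ∫ x in 0..n * h, f x ≤ h * ∑ k ∈ Finset.range n, (f (k * h) + f ((k + 1) * h)) / 2 := by
  have hnode : ∀ k ≤ n, (k : ℝ) * h ∈ Icc 0 (n * h) := fun k hk =>
    ⟨by positivity, mul_le_mul_of_nonneg_right (by exact_mod_cast hk) hh⟩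
  have hstep : ∀ k : ℕ, (k : ℝ) * h ≤ (k + 1 : ℕ) * h := fun k =>
    mul_le_mul_of_nonneg_right (by simp) hh
  have hsub : ∀ k < n, Icc ((k : ℝ) * h) ((k + 1 : ℕ) * h) ⊆ Icc 0 (n * h) := fun k hk =>
    Icc_subset_Icc (hnode k hk.le).1 (hnode (k + 1) hk).2
  have hint : ∀ k < n, IntervalIntegrable f volume ((k : ℕ) * h) ((k + 1 : ℕ) * h) :=
    fun k hk => hfi.mono_set (by
      rw [uIcc_of_le (hstep k), uIcc_of_le (hnode n le_rfl).1]
      exact hsub k hk)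
  have hsum := intervalIntegral.sum_integral_adjacent_intervals (a := fun k : ℕ => (k : ℝ) * h) hint
  simp only [Nat.cast_zero, zero_mul] at hsum
  rw [← hsum, Finset.mul_sum]
  refine Finset.sum_le_sum fun k hk => ?_
  have hk := Finset.mem_range.1 hk
  have := (hf.subset (hsub k hk) (convex_Icc _ _)).integral_le_trapezoid (hstep k) (hint k hk)
  push_cast at this ⊢
  linarith

noncomputable def expTail (g : ℝ → ℝ) (θ : ℝ) : ℝ := exp θ * ∫ y in Ioi θ, g y * exp (-y)

section ExpTail

variable {g : ℝ → ℝ} {a C θ : ℝ}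

theorem integrableOn_mul_exp_neg (hg : Continuous g) (hg0 : ∀ y ≥ a, 0 ≤ g y)
    (hC : ∀ y ≥ a, g y ≤ C * exp (-y)) : IntegrableOn (fun y => g y * exp (-y)) (Ioi a) := by
  refine integrableOn_Ioi_of_abs_le_exp_neg (C := C * exp (-a)) (by fun_prop) fun y hy => ?_
  have hexp : exp (-y) ≤ exp (-a) := exp_le_exp.2 (neg_le_neg hy)
  rw [abs_of_nonneg (mul_nonneg (hg0 y hy) (exp_pos _).le), mul_right_comm]
  exact mul_le_mul (hC y hy) hexp (exp_pos _).le ((hg0 y hy).trans (hC y hy))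

theorem hasDerivAt_expTail (hg : Continuous g)
    (hint : IntegrableOn (fun y => g y * exp (-y)) (Ioi a)) (hθ : a < θ) :
    HasDerivAt (expTail g) (expTail g θ - g θ) θ := by
  have hsplit : (fun t => (∫ y in Ioi a, g y * exp (-y)) - ∫ y in a..t, g y * exp (-y))
      =ᶠ[𝓝 θ] fun t => ∫ y in Ioi t, g y * exp (-y) := by
    filter_upwards [Ioi_mem_nhds hθ] with t ht
    rw [← intervalIntegral.integral_Ioi_sub_Ioi hint ht.le, sub_sub_cancel]
  have htail : HasDerivAt (fun t => ∫ y in Ioi t, g y * exp (-y)) (-(g θ * exp (-θ))) θ :=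
    ((intervalIntegral.integral_hasDerivAt_right
      ((by fun_prop : Continuous _).intervalIntegrable _ _)
      ((by fun_prop : Continuous fun y => g y * exp (-y)).stronglyMeasurableAtFilter _ _)
      (by fun_prop)).const_sub _).congr_of_eventuallyEq hsplit.symm
  refine ((hasDerivAt_exp θ).mul htail).congr_deriv ?_
  have he : exp θ * exp (-θ) = 1 := by rw [exp_neg, mul_inv_cancel₀ (exp_pos θ).ne']
  rw [expTail]
  linear_combination -(g θ) * he

theorem continuousOn_expTail (hint : IntegrableOn (fun y => g y * exp (-y)) (Ioi a)) :
    ContinuousOn (expTail g) (Ici a) :=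
  continuous_exp.continuousOn.mul hint.continuousOn_Ici_primitive_Ioi

theorem expTail_nonneg (hg0 : ∀ y ≥ a, 0 ≤ g y) (hθ : a ≤ θ) : 0 ≤ expTail g θ :=
  mul_nonneg (exp_pos _).le <| setIntegral_nonneg measurableSet_Ioi fun y hy =>
    mul_nonneg (hg0 y (hθ.trans (le_of_lt hy))) (exp_pos _).le

theorem expTail_le (hg0 : ∀ y ≥ a, 0 ≤ g y) (hC : ∀ y ≥ a, g y ≤ C * exp (-y)) (hθ : a ≤ θ) :
    expTail g θ ≤ C / 2 * exp (-θ) := by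
  have hbound : ∫ y in Ioi θ, g y * exp (-y) ≤ ∫ y in Ioi θ, C * exp (-2 * y) := by
    refine integral_mono_of_nonneg ?_ ((integrableOn_exp_mul_Ioi (by norm_num) θ).const_mul C) ?_
    · filter_upwards [self_mem_ae_restrict measurableSet_Ioi] with y hy
      exact mul_nonneg (hg0 y (hθ.trans (le_of_lt hy))) (exp_pos _).le
    · filter_upwards [self_mem_ae_restrict measurableSet_Ioi] with y hy
      rw [show -2 * y = -y + -y by ring, exp_add, ← mul_assoc]
      exact mul_le_mul_of_nonneg_right (hC y (hθ.trans (le_of_lt hy))) (exp_pos _).le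
  rw [integral_const_mul, integral_exp_mul_Ioi (by norm_num)] at hbound
  calc expTail g θ ≤ exp θ * (C * (-exp (-2 * θ) / -2)) :=
        mul_le_mul_of_nonneg_left hbound (exp_pos _).le
    _ = C / 2 * exp (-θ) := by
        rw [neg_div_neg_eq, show -θ = θ + -2 * θ by ring, exp_add]
        ring

theorem integral_Ioi_sub_expTail (hg : Continuous g) (hg0 : ∀ y ≥ a, 0 ≤ g y)
    (hC : ∀ y ≥ a, g y ≤ C * exp (-y)) {z : ℝ} (hz : a ≤ z) :
    ∫ θ in Ioi z, (g θ - expTail g θ) = expTail g z := by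
  have hint := integrableOn_mul_exp_neg hg hg0 hC
  have hF : ContinuousOn (expTail g) (Ici z) :=
    (continuousOn_expTail hint).mono (Ici_subset_Ici.2 hz)
  have hbound : ∀ θ ≥ z, |expTail g θ - g θ| ≤ (C / 2 + C) * exp (-θ) := fun θ hθ => by
    have hF0 := expTail_nonneg hg0 (hz.trans hθ)
    have hFC := expTail_le hg0 hC (hz.trans hθ)
    have hg0θ := hg0 θ (hz.trans hθ)
    have hCθ := hC θ (hz.trans hθ)
    rw [abs_le]
    constructor <;> nlinarith [exp_pos (-θ)]
  have hlim : Tendsto (expTail g) atTop (𝓝 0) :=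
    tendsto_zero_of_abs_le_exp_neg (C := C / 2) fun θ hθ => by
      rw [abs_of_nonneg (expTail_nonneg hg0 (hz.trans hθ))]
      exact expTail_le hg0 hC (hz.trans hθ)
  have h := integral_Ioi_of_hasDerivAt_of_tendsto (hF z self_mem_Ici)
    (fun θ hθ => hasDerivAt_expTail hg hint (hz.trans_lt hθ))
    (integrableOn_Ioi_of_abs_le_exp_neg (hF.sub hg.continuousOn) hbound) hlim
  have hneg : ∫ θ in Ioi z, (g θ - expTail g θ) = -∫ θ in Ioi z, (expTail g θ - g θ) := by
    rw [← integral_neg]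
    simp only [neg_sub]
  rw [hneg, h]
  ring

theorem exp_mul_integral_deriv_mul_exp_neg {g' : ℝ → ℝ} (hg : ∀ y, HasDerivAt g (g' y) y)
    (hg' : IntegrableOn (fun y => g' y * exp (-y)) (Ioi θ))
    (hint : IntegrableOn (fun y => g y * exp (-y)) (Ioi θ))
    (hlim : Tendsto (fun y => g y * exp (-y)) atTop (𝓝 0)) :
    exp θ * ∫ y in Ioi θ, g' y * exp (-y) = expTail g θ - g θ := by
  have hderiv : ∀ y ∈ Ici θ, HasDerivAt (fun y => g y * exp (-y))
      (g' y * exp (-y) - g y * exp (-y)) y := fun y _ =>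
    ((hg y).mul (hasDerivAt_neg y).exp).congr_deriv (by ring)
  have h := integral_Ioi_of_hasDerivAt_of_tendsto' hderiv (hg'.sub hint) hlim
  rw [integral_sub hg' hint] at h
  have he : exp θ * exp (-θ) = 1 := by rw [exp_neg, mul_inv_cancel₀ (exp_pos θ).ne']
  rw [expTail]
  linear_combination exp θ * h - g θ * he

end ExpTail

namespace OCS

noncomputable def κ : ℝ := (4 - 2 * √3) / 3

noncomputable def phi (k y : ℝ) : ℝ := 2 * y + y ^ 2 / 2 + k * y ^ 3

theorem κ_le_one_div_four : κ ≤ 1 / 4 := by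
  have : 13 / 8 ≤ √3 := Real.le_sqrt_of_sq_le (by norm_num)
  rw [κ]; linarith

theorem five_div_twentyEight_le_κ : 5 / 28 ≤ κ := by
  have : √3 ≤ 97 / 56 := (Real.sqrt_le_left (by norm_num)).2 (by norm_num)
  rw [κ]; linarith

theorem κ_nonneg : 0 ≤ κ := le_trans (by norm_num) five_div_twentyEight_le_κ

theorem phi_nonneg {k y : ℝ} (hk : 0 ≤ k) (hy : 0 ≤ y) : 0 ≤ phi k y := by
  unfold phi; positivity

theorem hasDerivAt_phi (k x : ℝ) : HasDerivAt (phi k) (2 + x + 3 * k * x ^ 2) x := by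
  have h := (((hasDerivAt_id' x).const_mul 2).add ((hasDerivAt_pow 2 x).div_const 2)).add
    ((hasDerivAt_pow 3 x).const_mul k)
  exact h.congr_deriv (by norm_num; ring)

@[fun_prop]
theorem continuous_phi (k : ℝ) : Continuous (phi k) := by
  unfold phi; fun_prop

theorem tendsto_phi_atTop {k : ℝ} (hk : 0 ≤ k) : Tendsto (phi k) atTop atTop := by
  refine tendsto_atTop_mono' _ ?_ (tendsto_id.const_mul_atTop two_pos)
  filter_upwards [eventually_ge_atTop 0] with y hy
  unfold phi; simp only [id]; nlinarith [mul_nonneg hk (pow_nonneg hy 3)]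

theorem integrableOn_exp_neg_phi {k : ℝ} (hk : 0 ≤ k) :
    IntegrableOn (fun y => exp (-phi k y)) (Ioi 0) := by
  refine integrableOn_Ioi_of_abs_le_exp_neg (C := 1) (by fun_prop) fun y hy => ?_
  rw [abs_of_pos (exp_pos _), one_mul, exp_le_exp, neg_le_neg_iff]
  unfold phi; nlinarith [mul_nonneg hk (pow_nonneg hy 3)]

theorem hasDerivAt_exp_id_sub_phi (k x : ℝ) :
    HasDerivAt (fun x => exp (x - phi k x)) (-(1 + x + 3 * k * x ^ 2) * exp (x - phi k x)) x := by
  have h : HasDerivAt (fun x => x - phi k x) (1 - (2 + x + 3 * k * x ^ 2)) x :=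
    (hasDerivAt_id' x).sub (hasDerivAt_phi k x)
  exact h.exp.congr_deriv (by ring)

theorem ocsP_eq (x : ℝ) : ocsP x = 1 - exp (x - phi κ x) := by
  rw [ocsP, phi, κ]; ring_nf

theorem hasDerivAt_ocsP (x : ℝ) :
    HasDerivAt ocsP ((1 + x + 3 * κ * x ^ 2) * exp (x - phi κ x)) x := by
  rw [show ocsP = fun x => 1 - exp (x - phi κ x) from funext ocsP_eq]
  exact ((hasDerivAt_exp_id_sub_phi κ x).const_sub 1).congr_deriv (by ring)

theorem deriv_ocsP : deriv ocsP = fun x => (1 + x + 3 * κ * x ^ 2) * exp (x - phi κ x) :=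
  funext fun x => (hasDerivAt_ocsP x).deriv

theorem hasDerivAt_deriv_ocsP (x : ℝ) : HasDerivAt (deriv ocsP)
    ((1 + 6 * κ * x - (1 + x + 3 * κ * x ^ 2) ^ 2) * exp (x - phi κ x)) x := by
  rw [deriv_ocsP]
  have hpoly : HasDerivAt (fun x => 1 + x + 3 * κ * x ^ 2) (1 + 6 * κ * x) x := by
    have h := ((hasDerivAt_id' x).const_add 1).add ((hasDerivAt_pow 2 x).const_mul (3 * κ))
    exact h.congr_deriv (by norm_num; ring)
  exact (hpoly.mul (hasDerivAt_exp_id_sub_phi κ x)).congr_deriv (by ring)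

theorem continuous_deriv_ocsP : Continuous (deriv ocsP) := by
  rw [deriv_ocsP]; unfold phi; fun_prop

theorem deriv_ocsP_nonneg {y : ℝ} (hy : 0 ≤ y) : 0 ≤ deriv ocsP y := by
  rw [deriv_ocsP]
  have := κ_nonneg
  positivity

theorem deriv_ocsP_le {y : ℝ} (hy : 0 ≤ y) : deriv ocsP y ≤ 2 * exp (-y) := by
  have hs : 0 ≤ y ^ 2 / 2 + κ * y ^ 3 := by have := κ_nonneg; positivity
  have hpoly : 1 + y + 3 * κ * y ^ 2 ≤ 2 * exp (y ^ 2 / 2 + κ * y ^ 3) := by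
    nlinarith [add_one_le_exp (y ^ 2 / 2 + κ * y ^ 3), κ_le_one_div_four,
      mul_nonneg κ_nonneg (pow_nonneg hy 3), sq_nonneg (1 - y / 2)]
  calc deriv ocsP y = (1 + y + 3 * κ * y ^ 2) * exp (-(y ^ 2 / 2 + κ * y ^ 3)) * exp (-y) := by
        simp only [deriv_ocsP, phi]
        rw [mul_assoc _ (exp _), ← exp_add]
        ring_nf
    _ ≤ 2 * exp (-y) := by
        gcongr
        rw [exp_neg, ← div_eq_mul_inv, div_le_iff₀ (exp_pos _)]
        exact hpoly

theorem abs_deriv_deriv_ocsP_le {y : ℝ} (hy : 0 ≤ y) : |deriv (deriv ocsP) y| ≤ 6 := by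
  set t := y + y ^ 2 / 2 + κ * y ^ 3
  have ht : 0 ≤ t := by have := κ_nonneg; positivity
  have hpoly : 1 + 6 * κ * y + (1 + y + 3 * κ * y ^ 2) ^ 2 ≤ 6 * exp t := by
    have hκ := κ_le_one_div_four
    have hsplit : 1 + 6 * κ * y + (1 + y + 3 * κ * y ^ 2) ^ 2 + (4 + (4 - 6 * κ) * y
        + (5 - 6 * κ) * y ^ 2 + 3 * y ^ 3 + (3 / 4 + 6 * κ - 9 * κ ^ 2) * y ^ 4
        + 3 * κ * y ^ 5 + 3 * κ ^ 2 * y ^ 6) = 6 * (1 + t + t ^ 2 / 2) := by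
      simp only [t]; ring
    nlinarith [quadratic_le_exp_of_nonneg ht, mul_nonneg (by linarith : 0 ≤ 4 - 6 * κ) hy,
      mul_nonneg (by linarith : 0 ≤ 5 - 6 * κ) (sq_nonneg y), pow_nonneg hy 3,
      mul_nonneg (by nlinarith [κ_nonneg] : 0 ≤ 3 / 4 + 6 * κ - 9 * κ ^ 2) (pow_nonneg hy 4),
      mul_nonneg κ_nonneg (pow_nonneg hy 5), mul_nonneg (sq_nonneg κ) (pow_nonneg hy 6)]
  rw [(hasDerivAt_deriv_ocsP y).deriv, abs_mul, abs_of_pos (exp_pos _),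
    show y - phi κ y = -t by simp only [t, phi]; ring, exp_neg, ← div_eq_mul_inv,
    div_le_iff₀ (exp_pos _)]
  refine (abs_sub _ _).trans ?_
  rw [abs_of_nonneg (by have := κ_nonneg; positivity), abs_of_nonneg (sq_nonneg _)]
  exact hpoly

theorem ocsC_eq {θ : ℝ} (hθ : 0 ≤ θ) : ocsC θ = deriv ocsP θ - expTail (deriv ocsP) θ := by
  have hbound : ∀ y ≥ θ, |deriv ocsP y * exp (-y)| ≤ 2 * exp (-y) := fun y hy => by
    rw [abs_of_nonneg (mul_nonneg (deriv_ocsP_nonneg (hθ.trans hy)) (exp_pos _).le)]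
    calc deriv ocsP y * exp (-y) ≤ 2 * exp (-y) * 1 :=
          mul_le_mul (deriv_ocsP_le (hθ.trans hy)) (exp_le_one_iff.2 (by linarith))
            (exp_pos _).le (by positivity)
      _ = 2 * exp (-y) := mul_one _
  have hderiv2 : ∀ y ≥ θ, |deriv (deriv ocsP) y * exp (-y)| ≤ 6 * exp (-y) := fun y hy => by
    rw [abs_mul, abs_of_pos (exp_pos _)]
    exact mul_le_mul_of_nonneg_right (abs_deriv_deriv_ocsP_le (hθ.trans hy)) (exp_pos _).le
  have hcont2 : Continuous (deriv (deriv ocsP)) := by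
    rw [show deriv (deriv ocsP) = _ from funext fun x => (hasDerivAt_deriv_ocsP x).deriv]
    unfold phi; fun_prop
  rw [ocsC, exp_mul_integral_deriv_mul_exp_neg
      (fun y => (hasDerivAt_deriv_ocsP y).differentiableAt.hasDerivAt)
      (integrableOn_Ioi_of_abs_le_exp_neg (by fun_prop) hderiv2)
      (integrableOn_Ioi_of_abs_le_exp_neg
        (continuous_deriv_ocsP.mul (by fun_prop)).continuousOn hbound)
      (tendsto_zero_of_abs_le_exp_neg hbound)]
  ring

theorem integral_ocsC_Ioi {z : ℝ} (hz : 0 ≤ z) :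
    ∫ θ in Ioi z, ocsC θ = expTail (deriv ocsP) z := by
  rw [setIntegral_congr_fun measurableSet_Ioi fun θ hθ => ocsC_eq (hz.trans (le_of_lt hθ))]
  exact integral_Ioi_sub_expTail continuous_deriv_ocsP (fun y hy => deriv_ocsP_nonneg hy)
    (fun y hy => deriv_ocsP_le hy) hz

theorem expTail_deriv_ocsP_zero :
    expTail (deriv ocsP) 0 = 1 - ∫ y in Ioi 0, exp (-phi κ y) := by
  have hintegrand : (fun y => deriv ocsP y * exp (-y))
      = fun y => (2 + y + 3 * κ * y ^ 2) * exp (-phi κ y) - exp (-phi κ y) := by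
    funext y
    rw [deriv_ocsP, mul_assoc, ← exp_add]
    ring_nf
  obtain ⟨hint, hval⟩ := integral_Ioi_deriv_mul_exp_neg (fun y _ => hasDerivAt_phi κ y)
    (fun y hy => by have := κ_nonneg; have : (0 : ℝ) < y := hy; positivity)
    (tendsto_phi_atTop κ_nonneg)
  rw [expTail, exp_zero, one_mul, hintegrand, integral_sub hint (integrableOn_exp_neg_phi κ_nonneg),
    hval]
  simp [phi]

theorem convexOn_exp_neg_phi {k : ℝ} (hk : 0 ≤ k) (hk1 : k ≤ 1) :
    ConvexOn ℝ (Ici 0) fun y => exp (-phi k y) := by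
  have hderiv : ∀ x, HasDerivAt (fun y => exp (-phi k y))
      (-(2 + x + 3 * k * x ^ 2) * exp (-phi k x)) x := fun x => by
    have h : HasDerivAt (fun y => -phi k y) (-(2 + x + 3 * k * x ^ 2)) x := (hasDerivAt_phi k x).neg
    exact h.exp.congr_deriv (by ring)
  have hderiv2 : ∀ x, HasDerivAt (fun x => -(2 + x + 3 * k * x ^ 2) * exp (-phi k x))
      (((2 + x + 3 * k * x ^ 2) ^ 2 - (1 + 6 * k * x)) * exp (-phi k x)) x := fun x => by
    have hpoly : HasDerivAt (fun x => -(2 + x + 3 * k * x ^ 2)) (-(1 + 6 * k * x)) x := by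
      have h := (((hasDerivAt_id' x).const_add 2).add ((hasDerivAt_pow 2 x).const_mul (3 * k))).neg
      exact h.congr_deriv (by norm_num; ring)
    exact (hpoly.mul (hderiv x)).congr_deriv (by ring)
  refine convexOn_of_hasDerivWithinAt2_nonneg (convex_Ici 0)
    (fun x _ => (hderiv x).continuousAt.continuousWithinAt)
    (fun x _ => (hderiv x).hasDerivWithinAt) (fun x _ => (hderiv2 x).hasDerivWithinAt)
    fun x hx => ?_
  rw [interior_Ici] at hx
  have hx : 0 ≤ x := le_of_lt hx
  have : 1 + 6 * k * x ≤ (2 + x + 3 * k * x ^ 2) ^ 2 := by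
    nlinarith [mul_nonneg hk (sq_nonneg (x - 1 / 4)), mul_nonneg hk (pow_nonneg hx 3),
      sq_nonneg (3 * k * x ^ 2), sq_nonneg x]
  exact mul_nonneg (by linarith) (exp_pos _).le

theorem integral_exp_neg_phi_lt : ∫ y in Ioi 0, exp (-phi (5 / 28) y) < 0.407 := by
  set f := fun y => exp (-phi (5 / 28) y)
  have hint := integrableOn_exp_neg_phi (k := 5 / 28) (by norm_num)
  have htrap : ∫ y in (0 : ℝ)..2, f y
      ≤ 1 / 20 * ∑ k ∈ Finset.range 40, (f (k * (1 / 20)) + f ((k + 1) * (1 / 20))) / 2 := by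
    have h := ConvexOn.integral_le_trapezoid_sum (h := 1 / 20) (by norm_num) 40
      ((convexOn_exp_neg_phi (by norm_num) (by norm_num)).subset Icc_subset_Ici_self
        (convex_Icc _ _))
      ((by fun_prop : Continuous f).intervalIntegrable _ _)
    norm_num at h ⊢
    exact h
  have htail : ∫ y in Ioi 2, f y ≤ f 2 / (2 + 2 + 3 * (5 / 28) * 2 ^ 2) := by
    refine integral_Ioi_exp_neg_le_of_tangent (by fun_prop) (by norm_num) fun y hy => ?_
    unfold phi
    nlinarith [mul_nonneg (sub_nonneg.2 hy) (sq_nonneg (y - 2))]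
  set B := fun y => 1 / ∑ i ∈ Finset.range 13, phi (5 / 28) y ^ i / i.factorial with hB
  have hnode : ∀ y ≥ 0, f y ≤ B y := fun y hy =>
    exp_neg_le_one_div_sum (phi_nonneg (by norm_num) hy) 12
  rw [← intervalIntegral.integral_interval_add_Ioi hint
    (hint.mono_set (Ioi_subset_Ioi zero_le_two))]
  calc _ ≤ 1 / 20 * ∑ k ∈ Finset.range 40, (f (k * (1 / 20)) + f ((k + 1) * (1 / 20))) / 2
        + f 2 / (2 + 2 + 3 * (5 / 28) * 2 ^ 2) := add_le_add htrap htail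
    _ ≤ 1 / 20 * ∑ k ∈ Finset.range 40, (B (k * (1 / 20)) + B ((k + 1) * (1 / 20))) / 2
        + B 2 / (2 + 2 + 3 * (5 / 28) * 2 ^ 2) := by
      gcongr <;> exact hnode _ (by positivity)
    _ < 0.407 := by
      simp only [hB, phi, Finset.sum_range_succ, Finset.sum_range_zero, Nat.factorial]
      norm_num

theorem integral_exp_neg_phi_κ_lt : ∫ y in Ioi 0, exp (-phi κ y) < 0.407 := by
  refine lt_of_le_of_lt (setIntegral_mono_on (integrableOn_exp_neg_phi κ_nonneg)
    (integrableOn_exp_neg_phi (by norm_num)) measurableSet_Ioi fun y hy => ?_)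
    integral_exp_neg_phi_lt
  have hy : 0 ≤ y := le_of_lt hy
  have := five_div_twentyEight_le_κ
  rw [exp_le_exp, neg_le_neg_iff]
  unfold phi
  nlinarith [pow_nonneg hy 3]

end OCS

open OCS

/-- The coefficients `c` satisfy `∫_z^∞ c(θ) dθ + c(z) = p'(z)` for all `z > 0`,
and `∫_0^∞ c(θ) dθ > 0.593`. -/
theorem stmt_9 :
    (∀ z > (0 : ℝ), (∫ θ in Set.Ioi z, ocsC θ) + ocsC z = deriv ocsP z) ∧
    (∫ θ in Set.Ioi (0 : ℝ), ocsC θ) > 0.593 := by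
  refine ⟨fun z hz => ?_, ?_⟩
  · rw [integral_ocsC_Ioi hz.le, ocsC_eq hz.le]
    ring
  · rw [integral_ocsC_Ioi le_rfl, expTail_deriv_ocsP_zero]
    norm_num
    linarith [integral_exp_neg_phi_κ_lt]
end

section
/- If f: [0,∞) → [0,∞) is nonincreasing with f(θ) = 0 for all θ ≥ Θ for some finite Θ, p is a differentiable function with p(0) = 0, c(θ) ≥ 0 satisfies ∫_z^∞ c(θ) dθ + c(z) = p'(z) for all z > 0, and a real number P satisfies P ≤ ∫₀^θ f(z) dz + f(θ) for all θ > 0, then P · ∫₀^∞ c(θ) dθ ≤ ∫₀^∞ p'(z) f(z) dz. -/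
/-!
Multiply `P ≤ ∫₀^θ f + f θ` by `c θ ≥ 0` and integrate over `θ > 0`. Exchanging the order of
integration in `∫_{θ>0} ∫_{0<z<θ} f z c θ` turns the right-hand side into
`∫_{z>0} f z (∫_{θ>z} c θ + c z) = ∫_{z>0} p' z f z`.
-/

open MeasureTheory Set

namespace Amortization

variable {f c : ℝ → ℝ} {a : ℝ}

noncomputable def triangleKernel (f c : ℝ → ℝ) : ℝ × ℝ → ℝ :=
  {q : ℝ × ℝ | q.1 < q.2}.indicator fun q => f q.1 * c q.2

theorem integrable_triangleKernel (hf : IntegrableOn f (Ioi a)) (hc : IntegrableOn c (Ioi a)) :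
    Integrable (triangleKernel f c) ((volume.restrict (Ioi a)).prod (volume.restrict (Ioi a))) :=
  (hf.mul_prod hc).indicator (measurableSet_lt measurable_fst measurable_snd)

theorem integral_triangleKernel_fst (θ : ℝ) :
    ∫ z in Ioi a, triangleKernel f c (z, θ) = (∫ z in Ioo a θ, f z) * c θ := by
  have h : (fun z => triangleKernel f c (z, θ)) = (Iio θ).indicator fun z => f z * c θ := by
    ext z
    simp [triangleKernel, indicator_apply]
  rw [h, setIntegral_indicator measurableSet_Iio, Ioi_inter_Iio, integral_mul_const]

theorem integral_triangleKernel_snd {z : ℝ} (hz : a ≤ z) :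
    ∫ θ in Ioi a, triangleKernel f c (z, θ) = f z * ∫ θ in Ioi z, c θ := by
  have h : (fun θ => triangleKernel f c (z, θ)) = (Ioi z).indicator fun θ => f z * c θ := by
    ext θ
    simp [triangleKernel, indicator_apply]
  rw [h, setIntegral_indicator measurableSet_Ioi, inter_eq_right.mpr (Ioi_subset_Ioi hz),
    integral_const_mul]

theorem integrableOn_integral_Ioo_mul (hf : IntegrableOn f (Ioi a)) (hc : IntegrableOn c (Ioi a)) :
    IntegrableOn (fun θ => (∫ z in Ioo a θ, f z) * c θ) (Ioi a) := by
  simpa only [IntegrableOn, integral_triangleKernel_fst] using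
    (integrable_triangleKernel hf hc).integral_prod_right

theorem integral_integral_Ioo_mul_eq (hf : IntegrableOn f (Ioi a)) (hc : IntegrableOn c (Ioi a)) :
    ∫ θ in Ioi a, (∫ z in Ioo a θ, f z) * c θ = ∫ z in Ioi a, f z * ∫ θ in Ioi z, c θ := by
  simp_rw [← integral_triangleKernel_fst]
  rw [← integral_integral_swap (f := fun z θ => triangleKernel f c (z, θ))
    (integrable_triangleKernel hf hc)]
  exact setIntegral_congr_fun measurableSet_Ioi fun z hz => integral_triangleKernel_snd hz.le

end Amortization

open Amortization

theorem stmt_10_general (f p c : ℝ → ℝ) (P : ℝ)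
    (hfpos : ∀ θ, 0 ≤ f θ)
    (hfint : IntegrableOn f (Set.Ioi 0) volume)
    (hcpos : ∀ θ > (0 : ℝ), 0 ≤ c θ)
    (hcint : IntegrableOn c (Set.Ioi 0) volume)
    (hpfint : IntegrableOn (fun z => deriv p z * f z) (Set.Ioi 0) volume)
    (hc : ∀ z > (0 : ℝ), (∫ θ in Set.Ioi z, c θ) + c z = deriv p z)
    (hP : ∀ θ > (0 : ℝ), P ≤ (∫ z in (0 : ℝ)..θ, f z) + f θ) :
    P * ∫ θ in Set.Ioi (0 : ℝ), c θ ≤ ∫ z in Set.Ioi (0 : ℝ), deriv p z * f z := by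
  have hpf_eq : EqOn (fun z => deriv p z * f z)
      (fun z => f z * (∫ θ in Ioi z, c θ) + f z * c z) (Ioi 0) := fun z hz => by
    simp only [← hc z hz]
    ring
  -- `0 ≤ f c ≤ p' f`, since the tail integral of `c` is nonnegative.
  have hfc : IntegrableOn (fun z => f z * c z) (Ioi 0) := by
    refine hpfint.mono' (hfint.aestronglyMeasurable.mul hcint.aestronglyMeasurable) ?_
    filter_upwards [ae_restrict_mem measurableSet_Ioi] with z (hz : 0 < z)
    have htail : 0 ≤ ∫ θ in Ioi z, c θ :=
      setIntegral_nonneg measurableSet_Ioi fun θ hθ => hcpos θ (hz.trans hθ)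
    rw [Real.norm_of_nonneg (mul_nonneg (hfpos z) (hcpos z hz)),
      show deriv p z * f z = _ from hpf_eq hz]
    nlinarith [hfpos z]
  have hf_tail : IntegrableOn (fun z => f z * ∫ θ in Ioi z, c θ) (Ioi 0) :=
    (hpfint.sub hfc).congr_fun (fun z hz => by simp [hpf_eq hz]) measurableSet_Ioi
  have hF : IntegrableOn (fun θ => (∫ z in Ioo 0 θ, f z) * c θ) (Ioi 0) :=
    integrableOn_integral_Ioo_mul hfint hcint
  calc P * ∫ θ in Ioi 0, c θ
      = ∫ θ in Ioi 0, P * c θ := (integral_const_mul P c).symm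
    _ ≤ ∫ θ in Ioi 0, ((∫ z in Ioo 0 θ, f z) * c θ + f θ * c θ) := by
        refine setIntegral_mono_on (hcint.const_mul P) (hF.add hfc) measurableSet_Ioi
          fun θ (hθ : 0 < θ) => ?_
        have h := hP θ hθ
        rw [intervalIntegral.integral_of_le hθ.le, integral_Ioc_eq_integral_Ioo] at h
        nlinarith [hcpos θ hθ]
    _ = ∫ z in Ioi 0, (f z * (∫ θ in Ioi z, c θ) + f z * c z) := by
        rw [integral_add hF hfc, integral_integral_Ioo_mul_eq hfint hcint, integral_add hf_tail hfc]
    _ = ∫ z in Ioi 0, deriv p z * f z := (setIntegral_congr_fun measurableSet_Ioi hpf_eq).symm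

/-- The general amortization lemma underlying the analysis of Equal-Filling-OCS:
if `f : [0,∞) → [0,∞)` is nonincreasing and eventually zero, `p` is differentiable
with `p 0 = 0`, the nonnegative coefficients `c` satisfy
`∫_z^∞ c(θ) dθ + c(z) = p'(z)` for all `z > 0`, and `P ≤ ∫₀^θ f + f(θ)` for all
`θ > 0`, then `P · ∫₀^∞ c ≤ ∫₀^∞ p'(z) f(z) dz`. -/
theorem stmt_10 (f p c : ℝ → ℝ) (P : ℝ)
    (hfpos : ∀ θ, 0 ≤ f θ)
    (hfmono : AntitoneOn f (Set.Ici 0))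
    (hfzero : ∃ Θ : ℝ, ∀ θ ≥ Θ, f θ = 0)
    (hfint : IntegrableOn f (Set.Ioi 0) volume)
    (hp : Differentiable ℝ p) (hp0 : p 0 = 0)
    (hcpos : ∀ θ > (0 : ℝ), 0 ≤ c θ)
    (hcint : IntegrableOn c (Set.Ioi 0) volume)
    (hpfint : IntegrableOn (fun z => deriv p z * f z) (Set.Ioi 0) volume)
    (hc : ∀ z > (0 : ℝ), (∫ θ in Set.Ioi z, c θ) + c z = deriv p z)
    (hP : ∀ θ > (0 : ℝ), P ≤ (∫ z in (0 : ℝ)..θ, f z) + f θ) :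
    P * ∫ θ in Set.Ioi (0 : ℝ), c θ ≤ ∫ z in Set.Ioi (0 : ℝ), deriv p z * f z :=
  stmt_10_general f p c P hfpos hfint hcpos hcint hpfint hc hP
end

section
/- There exists an instance with two classes of three agents each and four divisible items such that every deterministic non-wasteful online fractional matching algorithm produces a matching X with V₂(X) ≤ 3/2 and V*₂(Y₁(X)) ≥ 2 (for an appropriate labeling of classes); hence no deterministic non-wasteful online algorithm for divisible items is α-CEF for any α > 3/4. -/
open Finset

noncomputable section

variable {A : Type*} [Fintype A] [DecidableEq A] {k : ℕ}

/-- A deterministic online algorithm for divisible items: given the liker sets of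
previously arrived items and the liker set of the current item, it outputs the
fraction of the current item given to each agent. -/
abbrev FracAlg (A : Type*) := List (Finset A) → Finset A → (A → ℝ)

/-- The fraction of item `t` given to each agent when `Alg` runs on instance `L`. -/
def fracAt (Alg : FracAlg A) (L : List (Finset A)) (t : ℕ) : A → ℝ :=
  Alg (L.take t) (likersAt L t)

/-- Validity of a fractional online algorithm: nonnegative fractions supported on
likers, each item split to total at most 1, and each agent's capacity never
exceeded on any instance. -/
def ValidFrac (Alg : FracAlg A) : Prop :=
  (∀ h cur a, 0 ≤ Alg h cur a) ∧
  (∀ (h : List (Finset A)) (cur : Finset A) a, Alg h cur a ≠ 0 → a ∈ cur) ∧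
  (∀ (h : List (Finset A)) (cur : Finset A), ∑ a, Alg h cur a ≤ 1) ∧
  (∀ (L : List (Finset A)) a, ∑ t ∈ Finset.range L.length, fracAt Alg L t a ≤ 1)

/-- The utilitarian social welfare of the fractional matching produced on `L`. -/
def uswFrac (Alg : FracAlg A) (L : List (Finset A)) : ℝ :=
  ∑ t ∈ Finset.range L.length, ∑ a, fracAt Alg L t a

/-- The value obtained by class `i` on instance `L`. -/
def classValue (classOf : A → Fin k) (Alg : FracAlg A) (L : List (Finset A))
    (i : Fin k) : ℝ :=
  ∑ t ∈ Finset.range L.length, ∑ a ∈ classAgents classOf i, fracAt Alg L t a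

/-- The fractional bundle of class `j`: the fraction of each item given to `j`. -/
def bundleOf (classOf : A → Fin k) (Alg : FracAlg A) (L : List (Finset A))
    (j : Fin k) : ℕ → ℝ :=
  fun t => ∑ a ∈ classAgents classOf j, fracAt Alg L t a

/-- Optimistic fractional valuation `V*` of the class with agents `C` for an item
bundle `y`: the LP value of the best fractional matching of `y` to `C`. -/
def VstarFrac (L : List (Finset A)) (C : Finset A) (y : ℕ → ℝ) : ℝ :=
  sSup {v : ℝ | ∃ x : ℕ → A → ℝ,
    (∀ t a, 0 ≤ x t a) ∧
    (∀ t a, x t a ≠ 0 → a ∈ C ∧ a ∈ likersAt L t ∧ t < L.length) ∧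
    (∀ t, ∑ a ∈ C, x t a ≤ y t) ∧
    (∀ a, ∑ t ∈ Finset.range L.length, x t a ≤ 1) ∧
    v = ∑ t ∈ Finset.range L.length, ∑ a ∈ C, x t a}

/-- Non-wastefulness for divisible items: in the final matching there is no pair of
a liked item that is not fully assigned and an unsaturated agent liking it. -/
def NonWastefulFrac (Alg : FracAlg A) : Prop :=
  ∀ (L : List (Finset A)), ∀ t < L.length, ∀ a ∈ likersAt L t,
    (∑ a', fracAt Alg L t a') = 1 ∨
    (∑ t' ∈ Finset.range L.length, fracAt Alg L t' a) = 1

/-- `Alg` is `α`-CEF on every instance. -/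
def IsCEFfrac (classOf : A → Fin k) (α : ℝ) (Alg : FracAlg A) : Prop :=
  ∀ (L : List (Finset A)) (i j : Fin k),
    classValue classOf Alg L i ≥
      α * VstarFrac L (classAgents classOf i) (bundleOf classOf Alg L j)

/-- The proportional share of class `i`: the best over fractional matchings `x` of
all items to all agents of the worst value `V*ᵢ(Yⱼ(x))` over classes `j`. -/
def propShare (classOf : A → Fin k) (L : List (Finset A)) (i : Fin k) : ℝ :=
  sSup {v : ℝ | ∃ x : ℕ → A → ℝ,
    (∀ t a, 0 ≤ x t a) ∧
    (∀ t a, x t a ≠ 0 → a ∈ likersAt L t ∧ t < L.length) ∧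
    (∀ t, ∑ a, x t a ≤ 1) ∧
    (∀ a, ∑ t ∈ Finset.range L.length, x t a ≤ 1) ∧
    ∀ j : Fin k, v ≤ VstarFrac L (classAgents classOf i)
      (fun t => ∑ a ∈ classAgents classOf j, x t a)}

/-- `Alg` is `α`-CPROP on every instance. -/
def IsCPROPfrac (classOf : A → Fin k) (α : ℝ) (Alg : FracAlg A) : Prop :=
  ∀ (L : List (Finset A)) (i : Fin k),
    classValue classOf Alg L i ≥ α * propShare classOf L i


private lemma bracket_one (u v : ℝ) (hv : 0 ≤ v) (h : 1 ≤ u + v) :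
    min u 1 + min v (1 - min u 1) = 1 := by
  rcases le_total 1 u with h1 | h1
  · rw [min_eq_right h1]
    simp [min_eq_right hv]
  · rw [min_eq_left h1]
    rcases le_total v (1 - u) with h2 | h2
    · rw [min_eq_left h2]; linarith
    · rw [min_eq_right h2]; ring

private lemma adversary_case (α : ℝ) (hα : α > 3 / 4) (classOf : Fin 6 → Fin 2)
    (Alg : FracAlg (Fin 6)) (valid : ValidFrac Alg) (nw : NonWastefulFrac Alg)
    (cef : IsCEFfrac classOf α Alg)
    (c1 c2 c3 d1 d2 d3 : Fin 6) (i j : Fin 2)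
    (S T : Finset (Fin 6))
    (hS : S = {c1, c2, d1, d2}) (hT : T = {c1, c2, c3, d1})
    (hnd : ([c1, c2, c3, d1, d2, d3] : List (Fin 6)).Nodup)
    (hC : classAgents classOf i = {c1, c2, c3})
    (hD : classAgents classOf j = {d1, d2, d3})
    (hp : 1 ≤ Alg [] S c1 + Alg [] S c2 + Alg [S] S c1 + Alg [S] S c2)
    (hb : Alg [] S d2 + Alg [S] S d2 ≤ Alg [] S d1 + Alg [S] S d1) :
    False := by
  obtain ⟨hnn, hsupp, hcap1, hcap2⟩ := valid
  simp only [List.nodup_cons, List.mem_cons, List.not_mem_nil, or_false, not_or,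
    List.nodup_nil, and_true, List.mem_singleton] at hnd
  obtain ⟨⟨h12,h13,h14,h15,h16⟩,⟨h23,h24,h25,h26⟩,⟨h34,h35,h36⟩,⟨h45,h46⟩,h56,-⟩ := hnd
  set L : List (Finset (Fin 6)) := [S, S, T, T] with hL
  set f : ℕ → Fin 6 → ℝ := fracAt Alg L with hf
  have hlen : L.length = 4 := rfl
  have hlik0 : likersAt L 0 = S := rfl
  have hlik1 : likersAt L 1 = S := rfl
  have hlik2 : likersAt L 2 = T := rfl
  have hlik3 : likersAt L 3 = T := rfl
  have hf0 : Alg [] S = f 0 := rfl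
  have hf1 : Alg [S] S = f 1 := rfl
  rw [hf0, hf1] at hp hb
  have fnn : ∀ t a, 0 ≤ f t a := fun t a => hnn _ _ _
  have hzero : ∀ t a, a ∉ likersAt L t → f t a = 0 := by
    intro t a h
    by_contra h0
    exact h (hsupp _ _ a h0)
  have htot : ∀ t, ∑ a, f t a = ∑ a ∈ likersAt L t, f t a := fun t =>
    (Finset.sum_subset (Finset.subset_univ _) (fun a _ ha => hzero t a ha)).symm
  have cap1 : ∀ t, ∑ a, f t a ≤ 1 := fun t => hcap1 _ _
  have capA : ∀ a, f 0 a + f 1 a + f 2 a + f 3 a ≤ 1 := by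
    intro a
    have h := hcap2 L a
    rw [hlen] at h
    simpa [Finset.sum_range_succ, ← hf] using h
  have sumS : ∀ g : Fin 6 → ℝ, ∑ a ∈ S, g a = g c1 + g c2 + g d1 + g d2 := by
    intro g
    rw [hS, Finset.sum_insert (by simp [h12, h14, h15]),
      Finset.sum_insert (by simp [h24, h25]),
      Finset.sum_insert (by simp [h45]), Finset.sum_singleton]
    ring
  have sumT : ∀ g : Fin 6 → ℝ, ∑ a ∈ T, g a = g c1 + g c2 + g c3 + g d1 := by
    intro g
    rw [hT, Finset.sum_insert (by simp [h12, h13, h14]),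
      Finset.sum_insert (by simp [h23, h24]),
      Finset.sum_insert (by simp [h34]), Finset.sum_singleton]
    ring
  have sumD : ∀ g : Fin 6 → ℝ, ∑ a ∈ ({d1, d2, d3} : Finset (Fin 6)), g a = g d1 + g d2 + g d3 := by
    intro g
    rw [Finset.sum_insert (by simp [h45, h46]),
      Finset.sum_insert (by simp [h56]), Finset.sum_singleton]
    ring
  have sumC : ∀ g : Fin 6 → ℝ, ∑ a ∈ ({c1, c2, c3} : Finset (Fin 6)), g a = g c1 + g c2 + g c3 := by
    intro g
    rw [Finset.sum_insert (by simp [h12, h13]),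
      Finset.sum_insert (by simp [h23]), Finset.sum_singleton]
    ring
  -- every item is fully allocated
  have hfull : ∀ t, t < 4 → ∑ a, f t a = 1 := by
    intro t ht
    by_contra hne
    have hsat : ∀ a ∈ likersAt L t, ∑ t' ∈ Finset.range 4, f t' a = 1 := by
      intro a ha
      rcases nw L t (by rw [hlen]; exact ht) a ha with h | h
      · exact absurd h hne
      · rw [hlen] at h; exact h
    have hlt : ∑ a, f t a < 1 := lt_of_le_of_ne (cap1 t) hne
    have hcard : ∑ a ∈ likersAt L t, ∑ t' ∈ Finset.range 4, f t' a = 4 := by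
      rw [Finset.sum_congr rfl (fun a ha => hsat a ha)]
      interval_cases t
      · rw [hlik0, sumS]; norm_num
      · rw [hlik1, sumS]; norm_num
      · rw [hlik2, sumT]; norm_num
      · rw [hlik3, sumT]; norm_num
    have hle : ∑ a ∈ likersAt L t, ∑ t' ∈ Finset.range 4, f t' a ≤
        ∑ a, ∑ t' ∈ Finset.range 4, f t' a :=
      Finset.sum_le_sum_of_subset_of_nonneg (Finset.subset_univ _)
        (fun a _ _ => Finset.sum_nonneg fun t' _ => fnn t' a)
    have hswap : ∑ a, ∑ t' ∈ Finset.range 4, f t' a = ∑ t' ∈ Finset.range 4, ∑ a, f t' a :=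
      Finset.sum_comm
    rw [hcard, hswap] at hle
    rw [Finset.sum_range_succ, Finset.sum_range_succ, Finset.sum_range_succ,
      Finset.sum_range_succ, Finset.sum_range_zero] at hle
    interval_cases t <;> linarith [cap1 0, cap1 1, cap1 2, cap1 3]
  have e0 : f 0 c1 + f 0 c2 + f 0 d1 + f 0 d2 = 1 := by
    have h := hfull 0 (by norm_num); rwa [htot 0, hlik0, sumS] at h
  have e1 : f 1 c1 + f 1 c2 + f 1 d1 + f 1 d2 = 1 := by
    have h := hfull 1 (by norm_num); rwa [htot 1, hlik1, sumS] at h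
  have e2 : f 2 c1 + f 2 c2 + f 2 c3 + f 2 d1 = 1 := by
    have h := hfull 2 (by norm_num); rwa [htot 2, hlik2, sumT] at h
  have e3 : f 3 c1 + f 3 c2 + f 3 c3 + f 3 d1 = 1 := by
    have h := hfull 3 (by norm_num); rwa [htot 3, hlik3, sumT] at h
  -- zeros
  have zc30 : f 0 c3 = 0 := hzero 0 c3 (by
    rw [hlik0, hS]; simp [Ne.symm h13, Ne.symm h23, h34, h35])
  have zc31 : f 1 c3 = 0 := hzero 1 c3 (by
    rw [hlik1, hS]; simp [Ne.symm h13, Ne.symm h23, h34, h35])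
  have zd22 : f 2 d2 = 0 := hzero 2 d2 (by
    rw [hlik2, hT]; simp [Ne.symm h15, Ne.symm h25, Ne.symm h35, Ne.symm h45])
  have zd23 : f 3 d2 = 0 := hzero 3 d2 (by
    rw [hlik3, hT]; simp [Ne.symm h15, Ne.symm h25, Ne.symm h35, Ne.symm h45])
  have zd30 : f 0 d3 = 0 := hzero 0 d3 (by
    rw [hlik0, hS]; simp [Ne.symm h16, Ne.symm h26, Ne.symm h46, Ne.symm h56])
  have zd31 : f 1 d3 = 0 := hzero 1 d3 (by
    rw [hlik1, hS]; simp [Ne.symm h16, Ne.symm h26, Ne.symm h46, Ne.symm h56])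
  have zd32 : f 2 d3 = 0 := hzero 2 d3 (by
    rw [hlik2, hT]; simp [Ne.symm h16, Ne.symm h26, Ne.symm h36, Ne.symm h46])
  have zd33 : f 3 d3 = 0 := hzero 3 d3 (by
    rw [hlik3, hT]; simp [Ne.symm h16, Ne.symm h26, Ne.symm h36, Ne.symm h46])
  -- class value of class j
  have hCV : classValue classOf Alg L j =
      (f 0 d1 + f 0 d2 + f 0 d3) + (f 1 d1 + f 1 d2 + f 1 d3) +
      (f 2 d1 + f 2 d2 + f 2 d3) + (f 3 d1 + f 3 d2 + f 3 d3) := by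
    unfold classValue
    rw [hlen, hD, Finset.sum_range_succ, Finset.sum_range_succ, Finset.sum_range_succ,
      Finset.sum_range_succ, Finset.sum_range_zero, sumD, sumD, sumD, sumD]
    simp only [← hf]
    ring
  have hCVle : classValue classOf Alg L j ≤ 3 / 2 := by
    rw [hCV]
    linarith [capA d1, e0, e1, hp, hb, zd30, zd31, zd32, zd33, zd22, zd23,
      fnn 2 d1, fnn 3 d1]
  -- the bundle of class i
  set y : ℕ → ℝ := bundleOf classOf Alg L i with hy
  have hyt : ∀ t, y t = f t c1 + f t c2 + f t c3 := by
    intro t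
    rw [hy]
    unfold bundleOf
    rw [hC, sumC]
  have hynn : ∀ t, 0 ≤ y t := by
    intro t
    rw [hyt t]
    have := fnn t c1; have := fnn t c2; have := fnn t c3
    linarith
  have hy01 : 1 ≤ y 0 + y 1 := by
    rw [hyt 0, hyt 1]; linarith [hp, zc30, zc31]
  have hy23 : 1 ≤ y 2 + y 3 := by
    rw [hyt 2, hyt 3]; linarith [e2, e3, capA d1, fnn 0 d1, fnn 1 d1]
  -- V* of class j on the bundle of class i is at least 2
  have h2mem : (2:ℝ) ∈ {v : ℝ | ∃ x : ℕ → Fin 6 → ℝ,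
      (∀ t a, 0 ≤ x t a) ∧
      (∀ t a, x t a ≠ 0 → a ∈ classAgents classOf j ∧ a ∈ likersAt L t ∧ t < L.length) ∧
      (∀ t, ∑ a ∈ classAgents classOf j, x t a ≤ y t) ∧
      (∀ a, ∑ t ∈ Finset.range L.length, x t a ≤ 1) ∧
      v = ∑ t ∈ Finset.range L.length, ∑ a ∈ classAgents classOf j, x t a} := by
    refine ⟨fun t a => if t = 0 ∧ a = d2 then min (y 0) 1
      else if t = 1 ∧ a = d2 then min (y 1) (1 - min (y 0) 1)
      else if t = 2 ∧ a = d1 then min (y 2) 1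
      else if t = 3 ∧ a = d1 then min (y 3) (1 - min (y 2) 1) else 0, ?_, ?_, ?_, ?_, ?_⟩
    · intro t a
      dsimp only
      have m0 : min (y 0) 1 ≤ 1 := min_le_right _ _
      have m2 : min (y 2) 1 ≤ 1 := min_le_right _ _
      split_ifs
      · exact le_min (hynn 0) zero_le_one
      · exact le_min (hynn 1) (by linarith)
      · exact le_min (hynn 2) zero_le_one
      · exact le_min (hynn 3) (by linarith)
      · exact le_rfl
    · intro t a hxa
      dsimp only at hxa
      split_ifs at hxa with h1 h2 h3 h4
      · obtain ⟨rfl, rfl⟩ := h1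
        exact ⟨by rw [hD]; simp, by rw [hlik0, hS]; simp, by rw [hlen]; norm_num⟩
      · obtain ⟨rfl, rfl⟩ := h2
        exact ⟨by rw [hD]; simp, by rw [hlik1, hS]; simp, by rw [hlen]; norm_num⟩
      · obtain ⟨rfl, rfl⟩ := h3
        exact ⟨by rw [hD]; simp, by rw [hlik2, hT]; simp, by rw [hlen]; norm_num⟩
      · obtain ⟨rfl, rfl⟩ := h4
        exact ⟨by rw [hD]; simp, by rw [hlik3, hT]; simp, by rw [hlen]; norm_num⟩
      · exact absurd rfl hxa
    · intro t
      rw [hD, sumD]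
      rcases t with _ | _ | _ | _ | t
      · simp [h45, Ne.symm h56]
      · simp [h45, Ne.symm h56]
      · simp [Ne.symm h45, Ne.symm h46]
      · simp [Ne.symm h45, Ne.symm h46]
      · simp
        exact hynn _
    · intro a
      rw [hlen, Finset.sum_range_succ, Finset.sum_range_succ, Finset.sum_range_succ,
        Finset.sum_range_succ, Finset.sum_range_zero]
      dsimp only
      by_cases ha2 : a = d2
      · subst ha2
        simp [Ne.symm h45]
        have := min_le_right (y 1) (1 - min (y 0) 1)
        have := min_le_right (y 0) (1:ℝ)
        linarith
      · by_cases ha1 : a = d1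
        · subst ha1
          simp [h45, ha2]
          have := min_le_right (y 3) (1 - min (y 2) 1)
          have := min_le_right (y 2) (1:ℝ)
          linarith
        · simp [ha1, ha2]
    · rw [hlen, hD, Finset.sum_range_succ, Finset.sum_range_succ, Finset.sum_range_succ,
        Finset.sum_range_succ, Finset.sum_range_zero, sumD, sumD, sumD, sumD]
      have b1 := bracket_one (y 0) (y 1) (hynn 1) hy01
      have b2 := bracket_one (y 2) (y 3) (hynn 3) hy23
      simp [h45, Ne.symm h45, Ne.symm h56, Ne.symm h46]
      linarith
  have hbdd : BddAbove {v : ℝ | ∃ x : ℕ → Fin 6 → ℝ,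
      (∀ t a, 0 ≤ x t a) ∧
      (∀ t a, x t a ≠ 0 → a ∈ classAgents classOf j ∧ a ∈ likersAt L t ∧ t < L.length) ∧
      (∀ t, ∑ a ∈ classAgents classOf j, x t a ≤ y t) ∧
      (∀ a, ∑ t ∈ Finset.range L.length, x t a ≤ 1) ∧
      v = ∑ t ∈ Finset.range L.length, ∑ a ∈ classAgents classOf j, x t a} := by
    refine ⟨6, ?_⟩
    rintro v ⟨x, hx1, hx2, hx3, hx4, rfl⟩
    have hswap : ∑ t ∈ Finset.range L.length, ∑ a ∈ classAgents classOf j, x t a =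
        ∑ a ∈ classAgents classOf j, ∑ t ∈ Finset.range L.length, x t a := Finset.sum_comm
    rw [hswap]
    calc ∑ a ∈ classAgents classOf j, ∑ t ∈ Finset.range L.length, x t a
        ≤ ∑ _a ∈ classAgents classOf j, (1:ℝ) := Finset.sum_le_sum (fun a _ => hx4 a)
      _ = ((classAgents classOf j).card : ℝ) := by simp
      _ ≤ 6 := by
          have h := Finset.card_le_univ (classAgents classOf j)
          simp only [Finset.card_univ, Fintype.card_fin] at h
          exact_mod_cast h
  have hVs : (2:ℝ) ≤ VstarFrac L (classAgents classOf j) y := le_csSup hbdd h2mem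
  have hcef := cef L j i
  rw [← hy] at hcef
  have hα0 : (0:ℝ) < α := by linarith
  have hmul : α * 2 ≤ α * VstarFrac L (classAgents classOf j) y :=
    mul_le_mul_of_nonneg_left hVs hα0.le
  linarith

/-- Impossibility of `α`-CEF with non-wastefulness for `α > 3/4` for divisible
items: with six agents partitioned into two classes of three (the adversarial
instance has four divisible items), no deterministic non-wasteful online fractional
matching algorithm is `α`-CEF for any `α > 3/4`. -/
theorem stmt_11 (α : ℝ) (hα : α > 3 / 4) :
    ¬ ∃ Alg : FracAlg (Fin 6),
      ValidFrac Alg ∧ NonWastefulFrac Alg ∧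
      IsCEFfrac (fun a : Fin 6 => if (a : ℕ) < 3 then (0 : Fin 2) else 1) α Alg := by
  rintro ⟨Alg, valid, nw, cef⟩
  obtain ⟨hnn, hsupp, hcap1, hcap2⟩ := id valid
  set S : Finset (Fin 6) := {0, 1, 3, 4} with hSdef
  have sumS4 : ∀ g : Fin 6 → ℝ, ∑ a ∈ S, g a = g 0 + g 1 + g 3 + g 4 := by
    intro g
    rw [hSdef, Finset.sum_insert (by decide), Finset.sum_insert (by decide),
      Finset.sum_insert (by decide), Finset.sum_singleton]
    ring
  have hfull2 : ∀ t, t < 2 → ∑ a, fracAt Alg [S, S] t a = 1 := by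
    intro t ht
    by_contra hne
    have hsat : ∀ a ∈ S, fracAt Alg [S, S] 0 a + fracAt Alg [S, S] 1 a = 1 := by
      intro a ha
      have hmem : a ∈ likersAt [S, S] t := by
        interval_cases t <;> exact ha
      rcases nw [S, S] t ht a hmem with h | h
      · exact absurd h hne
      · simpa [Finset.sum_range_succ] using h
    have h4 : ∑ a ∈ S, (fracAt Alg [S, S] 0 a + fracAt Alg [S, S] 1 a) = 4 := by
      rw [Finset.sum_congr rfl hsat, sumS4]
      norm_num
    have hle : ∑ a ∈ S, (fracAt Alg [S, S] 0 a + fracAt Alg [S, S] 1 a) ≤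
        ∑ a, (fracAt Alg [S, S] 0 a + fracAt Alg [S, S] 1 a) :=
      Finset.sum_le_sum_of_subset_of_nonneg (Finset.subset_univ _)
        (fun a _ _ => add_nonneg (hnn _ _ _) (hnn _ _ _))
    rw [h4, Finset.sum_add_distrib] at hle
    have c0 : ∑ a, fracAt Alg [S, S] 0 a ≤ 1 := hcap1 _ _
    have c1 : ∑ a, fracAt Alg [S, S] 1 a ≤ 1 := hcap1 _ _
    linarith
  have full0 := hfull2 0 (by norm_num)
  have full1 := hfull2 1 (by norm_num)
  rw [Fin.sum_univ_six] at full0 full1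
  have hz : ∀ t, t < 2 → ∀ a : Fin 6, a ∉ S → fracAt Alg [S, S] t a = 0 := by
    intro t ht a ha
    by_contra h0
    have hmem : a ∈ likersAt [S, S] t := hsupp _ _ a h0
    have : a ∈ S := by interval_cases t <;> exact hmem
    exact ha this
  have z20 : fracAt Alg [S, S] 0 2 = 0 := hz 0 (by norm_num) 2 (by rw [hSdef]; decide)
  have z21 : fracAt Alg [S, S] 1 2 = 0 := hz 1 (by norm_num) 2 (by rw [hSdef]; decide)
  have z50 : fracAt Alg [S, S] 0 5 = 0 := hz 0 (by norm_num) 5 (by rw [hSdef]; decide)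
  have z51 : fracAt Alg [S, S] 1 5 = 0 := hz 1 (by norm_num) 5 (by rw [hSdef]; decide)
  by_cases hp : 1 ≤ fracAt Alg [S, S] 0 0 + fracAt Alg [S, S] 0 1 +
      fracAt Alg [S, S] 1 0 + fracAt Alg [S, S] 1 1
  · rcases le_total (fracAt Alg [S, S] 0 4 + fracAt Alg [S, S] 1 4)
        (fracAt Alg [S, S] 0 3 + fracAt Alg [S, S] 1 3) with hbb | hbb
    · exact adversary_case α hα _ Alg valid nw cef 0 1 2 3 4 5 0 1 S {0, 1, 2, 3}
        hSdef rfl (by decide) (by decide) (by decide) hp hbb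
    · exact adversary_case α hα _ Alg valid nw cef 0 1 2 4 3 5 0 1 S {0, 1, 2, 4}
        (by rw [hSdef]; decide) rfl (by decide) (by decide) (by decide) hp hbb
  · push_neg at hp
    have hq : 1 ≤ fracAt Alg [S, S] 0 3 + fracAt Alg [S, S] 0 4 +
        fracAt Alg [S, S] 1 3 + fracAt Alg [S, S] 1 4 := by
      linarith
    rcases le_total (fracAt Alg [S, S] 0 1 + fracAt Alg [S, S] 1 1)
        (fracAt Alg [S, S] 0 0 + fracAt Alg [S, S] 1 0) with haa | haa
    · exact adversary_case α hα _ Alg valid nw cef 3 4 5 0 1 2 1 0 S {3, 4, 5, 0}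
        (by rw [hSdef]; decide) rfl (by decide) (by decide) (by decide) hq haa
    · exact adversary_case α hα _ Alg valid nw cef 3 4 5 1 0 2 1 0 S {3, 4, 5, 1}
        (by rw [hSdef]; decide) rfl (by decide) (by decide) (by decide) hq haa

end
end

section
/- No deterministic online algorithm for matching divisible items achieves α-CPROP for any α > 1 − 1/e. -/
open Finset

/-!
With a single class the proportional share is the size of a maximum fractional matching, and the
bound is the classical one for online fractional matching. Against a given algorithm on `n` agents
the adversary presents `n` items: the first is liked by everybody, and each further item by the
likers of the previous one except the one with least load after that item (its victim). The victims
form a perfect matching, so the proportional share is `n`. Victim `t` receives nothing after step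
`t` and had least load among the `n - t` current likers, so its final load `vₜ` satisfies
`(n - t) vₜ ≤ t + 1 - ∑_{s<t} vₛ`. Along this recurrence the deficit `t - ∑_{s<t} vₛ` is at least
`(n - t) log ((n + 1) / (n - t + 1))`, which bounds the welfare by `n - r` once
`e (r + 1) ≤ n + 1`, that is by about `(1 - 1/e) n`.
-/

noncomputable section

open Real

theorem mul_log_le_sub_sum {n : ℕ} {v : ℕ → ℝ}
    (hkey : ∀ t < n, (n - t : ℝ) * v t ≤ t + 1 - ∑ s ∈ range t, v s) :
    ∀ t ≤ n, (n - t : ℝ) * log ((n + 1) / (n - t + 1)) ≤ t - ∑ s ∈ range t, v s := by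
  intro t
  induction t with
  | zero => intro _; simp
  | succ t ih =>
    intro ht
    have hc : (1 : ℝ) ≤ n - t := by
      have : ((t + 1 : ℕ) : ℝ) ≤ n := by exact_mod_cast ht
      push_cast at this; linarith
    have IH := ih (by omega)
    have hk := hkey t (by omega)
    set c : ℝ := n - t
    have hc0 : 0 < c := by linarith
    have hlog : c * log ((c + 1) / c) ≤ 1 := by
      have h := Real.log_le_sub_one_of_pos (show 0 < (c + 1) / c by positivity)
      have he : (c + 1) / c - 1 = 1 / c := by field_simp; ring
      rw [he] at h
      calc c * log ((c + 1) / c) ≤ c * (1 / c) := by gcongr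
        _ = 1 := by field_simp
    have hsplit : log ((n + 1) / c) = log ((n + 1) / (c + 1)) + log ((c + 1) / c) := by
      rw [← Real.log_mul (by positivity) (by positivity)]
      congr 1
      field_simp
    have hn1 : (n : ℝ) - (t + 1 : ℕ) + 1 = c := by push_cast; ring
    have hn2 : (n : ℝ) - (t + 1 : ℕ) = c - 1 := by push_cast; ring
    rw [hn1, hn2, hsplit, sum_range_succ]
    push_cast
    -- With `D = t - ∑_{s<t} vₛ`, `hk` gives `c (D + 1 - vₜ) ≥ (c - 1) (D + 1)`;
    -- then use `IH` and `hlog`.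
    refine le_of_mul_le_mul_left ?_ hc0
    nlinarith [mul_le_mul_of_nonneg_left hlog (by linarith : (0 : ℝ) ≤ c - 1)]

theorem sum_range_le_sub_of_exp_mul_le {n r : ℕ} {v : ℕ → ℝ} (hv : ∀ t < n, v t ≤ 1)
    (hkey : ∀ t < n, (n - t : ℝ) * v t ≤ t + 1 - ∑ s ∈ range t, v s)
    (hr : exp 1 * (r + 1) ≤ n + 1) :
    ∑ t ∈ range n, v t ≤ n - r := by
  have hrn : r ≤ n := by
    have := Real.add_one_le_exp 1
    have : (r : ℝ) ≤ n := by nlinarith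
    exact_mod_cast this
  obtain ⟨m, rfl⟩ := Nat.exists_eq_add_of_le' hrn
  have hhead := mul_log_le_sub_sum hkey m (by omega)
  have hsub : ((m + r : ℕ) : ℝ) - m = r := by push_cast; ring
  rw [hsub] at hhead
  have hlog : 1 ≤ log ((((m + r : ℕ) : ℝ) + 1) / (r + 1)) := by
    rw [Real.le_log_iff_exp_le (by positivity), le_div_iff₀ (by positivity)]
    exact_mod_cast hr
  have htail : ∑ i ∈ range r, v (m + i) ≤ r := by
    calc ∑ i ∈ range r, v (m + i) ≤ ∑ _i ∈ range r, (1 : ℝ) :=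
          sum_le_sum fun i hi => hv _ (by simp at hi; omega)
      _ = r := by simp
  rw [sum_range_add]
  push_cast
  nlinarith

theorem exists_lt_mul_and_exp_mul_le {β : ℝ} (hβ : exp 1 * β < 1) :
    ∃ n r : ℕ, β * n < r ∧ exp 1 * (r + 1) ≤ n + 1 := by
  set M := max β 0
  have hθ : 0 < 1 - exp 1 * M := by
    rcases max_cases β 0 with ⟨h, -⟩ | ⟨h, -⟩ <;> simp only [M, h] <;> linarith
  obtain ⟨n, hn⟩ := exists_nat_ge (2 * exp 1 / (1 - exp 1 * M))
  rw [div_le_iff₀ hθ] at hn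
  have hMn : 0 ≤ M * n := by positivity
  refine ⟨n, ⌊M * n⌋₊ + 1, ?_, ?_⟩
  · calc β * n ≤ M * n := by gcongr; exact le_max_left _ _
      _ < _ := by push_cast; exact Nat.lt_floor_add_one _
  · have := Nat.floor_le hMn
    have := exp_pos 1
    push_cast
    nlinarith

section ProportionalShare

variable {A : Type*}

theorem sum_sum_le_card {m : ℕ} {x : ℕ → A → ℝ} (hcap : ∀ a, ∑ t ∈ range m, x t a ≤ 1)
    (C : Finset A) : ∑ t ∈ range m, ∑ a ∈ C, x t a ≤ #C := by
  rw [sum_comm]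
  calc ∑ a ∈ C, ∑ t ∈ range m, x t a ≤ ∑ _a ∈ C, (1 : ℝ) := sum_le_sum fun a _ => hcap a
    _ = #C := by simp

theorem VstarFrac_le_card [Fintype A] (L : List (Finset A)) (C : Finset A) (y : ℕ → ℝ) :
    VstarFrac L C y ≤ #C :=
  Real.sSup_le (by rintro v ⟨x, -, -, -, hcap, rfl⟩; exact sum_sum_le_card hcap C) (by positivity)

theorem le_VstarFrac [Fintype A] {L : List (Finset A)} {C : Finset A} {y : ℕ → ℝ}
    {x : ℕ → A → ℝ} (hx0 : ∀ t a, 0 ≤ x t a)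
    (hsupp : ∀ t a, x t a ≠ 0 → a ∈ C ∧ a ∈ likersAt L t ∧ t < L.length)
    (hy : ∀ t, ∑ a ∈ C, x t a ≤ y t) (hcap : ∀ a, ∑ t ∈ range L.length, x t a ≤ 1) :
    ∑ t ∈ range L.length, ∑ a ∈ C, x t a ≤ VstarFrac L C y :=
  le_csSup ⟨#C, by rintro v ⟨x, -, -, -, hcap, rfl⟩; exact sum_sum_le_card hcap C⟩
    ⟨x, hx0, hsupp, hy, hcap, rfl⟩

theorem le_propShare [Fintype A] {k : ℕ} {classOf : A → Fin k} {L : List (Finset A)} {i : Fin k}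
    {x : ℕ → A → ℝ} {v : ℝ} (hx0 : ∀ t a, 0 ≤ x t a)
    (hsupp : ∀ t a, x t a ≠ 0 → a ∈ likersAt L t ∧ t < L.length)
    (hitem : ∀ t, ∑ a, x t a ≤ 1) (hcap : ∀ a, ∑ t ∈ range L.length, x t a ≤ 1)
    (hv : ∀ j, v ≤
      VstarFrac L (classAgents classOf i) fun t => ∑ a ∈ classAgents classOf j, x t a) :
    v ≤ propShare classOf L i :=
  le_csSup ⟨#(classAgents classOf i), by
      rintro w ⟨x, -, -, -, -, hw⟩; exact (hw i).trans (VstarFrac_le_card _ _ _)⟩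
    ⟨x, hx0, hsupp, hitem, hcap, hv⟩

theorem classAgents_eq_univ [Fintype A] (classOf : A → Fin 1) (i : Fin 1) :
    classAgents classOf i = univ :=
  filter_true_of_mem fun _ _ => Subsingleton.elim _ _

theorem classValue_eq_uswFrac [Fintype A] (classOf : A → Fin 1) (Alg : FracAlg A)
    (L : List (Finset A)) : classValue classOf Alg L 0 = uswFrac Alg L := by
  rw [classValue, classAgents_eq_univ, uswFrac]

theorem length_le_propShare [Fintype A] [DecidableEq A] (classOf : A → Fin 1) (L : List (Finset A))
    {σ : ℕ → A} (hσ : ∀ t < L.length, σ t ∈ likersAt L t) (hinj : Set.InjOn σ (range L.length)) :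
    (L.length : ℝ) ≤ propShare classOf L 0 := by
  let x : ℕ → A → ℝ := fun t a => if t < L.length ∧ σ t = a then 1 else 0
  have hx0 (t : ℕ) (a : A) : 0 ≤ x t a := by positivity
  have hsupp (t : ℕ) (a : A) (hne : x t a ≠ 0) : a ∈ likersAt L t ∧ t < L.length := by
    obtain ⟨ht, rfl⟩ : t < L.length ∧ σ t = a := by simpa [x] using hne
    exact ⟨hσ t ht, ht⟩
  have hitem (t : ℕ) : ∑ a, x t a = if t < L.length then 1 else 0 := by
    by_cases ht : t < L.length <;> simp [x, ht]
  have hcap (a : A) : ∑ t ∈ range L.length, x t a ≤ 1 := by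
    calc ∑ t ∈ range L.length, x t a = #((range L.length).filter (σ · = a)) := by
          rw [card_eq_sum_ones, Nat.cast_sum, sum_filter]
          exact sum_congr rfl fun t ht => by simp [x, mem_range.mp ht]
      _ ≤ 1 := by
          refine Nat.cast_le_one.mpr (card_le_one.mpr fun s hs u hu => ?_)
          simp only [mem_filter] at hs hu
          exact hinj hs.1 hu.1 (hs.2.trans hu.2.symm)
  refine le_propShare hx0 hsupp (fun t => by rw [hitem]; split_ifs <;> norm_num) hcap fun j => ?_
  rw [classAgents_eq_univ, classAgents_eq_univ]
  calc (L.length : ℝ) = ∑ t ∈ range L.length, ∑ a ∈ univ, x t a := by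
        rw [sum_congr rfl fun t ht => (hitem t).trans (if_pos (mem_range.mp ht))]; simp
    _ ≤ _ := le_VstarFrac hx0 (fun t a hne => ⟨mem_univ a, hsupp t a hne⟩) (fun _ => le_rfl) hcap

end ProportionalShare

section Load

variable {A : Type*} (B : FracAlg A)

def load (L : List (Finset A)) (a : A) : ℝ :=
  ∑ t ∈ range L.length, fracAt B L t a

theorem sum_load [Fintype A] (L : List (Finset A)) : ∑ a, load B L a = uswFrac B L := by
  simp only [uswFrac, load]
  exact Finset.sum_comm

theorem uswFrac_le_length [Fintype A] {B : FracAlg A} (hB : ValidFrac B) (L : List (Finset A)) :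
    uswFrac B L ≤ L.length := by
  calc uswFrac B L ≤ ∑ _t ∈ range L.length, (1 : ℝ) := sum_le_sum fun t _ => hB.2.2.1 _ _
    _ = L.length := by simp

end Load

def argminOn {α β : Type*} [Nonempty α] [LinearOrder β] (s : Finset α) (f : α → β) : α :=
  Classical.epsilon fun a => a ∈ s ∧ ∀ b ∈ s, f a ≤ f b

theorem argminOn_spec {α β : Type*} [Nonempty α] [LinearOrder β] {s : Finset α} (f : α → β)
    (hs : s.Nonempty) : argminOn s f ∈ s ∧ ∀ b ∈ s, f (argminOn s f) ≤ f b :=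
  Classical.epsilon_spec (s.exists_min_image f hs)

section Adversary

variable {A : Type*} [Fintype A] [DecidableEq A] [Nonempty A] (B : FracAlg A)

def nextLikers (P : List (Finset A)) : Finset A :=
  match P.getLast? with
  | none => univ
  | some s => s.erase (argminOn s (load B P))

def adversary : ℕ → List (Finset A)
  | 0 => []
  | t + 1 => adversary t ++ [nextLikers B (adversary t)]

def likers (t : ℕ) : Finset A := nextLikers B (adversary B t)

def victim (t : ℕ) : A := argminOn (likers B t) (load B (adversary B (t + 1)))

theorem adversary_succ (t : ℕ) : adversary B (t + 1) = adversary B t ++ [likers B t] := rfl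

theorem length_adversary (t : ℕ) : (adversary B t).length = t := by
  induction t with
  | zero => rfl
  | succ t ih => simp [adversary_succ, ih]

theorem adversary_prefix {s t : ℕ} (h : s ≤ t) : adversary B s <+: adversary B t := by
  induction t, h using Nat.le_induction with
  | base => exact List.prefix_refl _
  | succ t _ ih => exact ih.trans (List.prefix_append _ _)

theorem take_adversary {s t : ℕ} (h : s ≤ t) : (adversary B t).take s = adversary B s := by
  have := List.prefix_iff_eq_take.mp (adversary_prefix B h)
  rw [length_adversary] at this
  exact this.symm

theorem likersAt_adversary {s t : ℕ} (h : s < t) : likersAt (adversary B t) s = likers B s := by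
  obtain ⟨u, hu⟩ := adversary_prefix B (Nat.succ_le_of_lt h)
  rw [likersAt, ← hu, adversary_succ, List.getD_append _ _ _ _ (by simp [length_adversary]),
    List.getD_append_right _ _ _ _ (by simp [length_adversary])]
  simp [length_adversary]

theorem fracAt_adversary {s t : ℕ} (h : s < t) :
    fracAt B (adversary B t) s = B (adversary B s) (likers B s) := by
  rw [fracAt, take_adversary B h.le, likersAt_adversary B h]

theorem load_adversary_succ (t : ℕ) (a : A) :
    load B (adversary B (t + 1)) a =
      load B (adversary B t) a + B (adversary B t) (likers B t) a := by
  simp only [load, length_adversary, sum_range_succ]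
  rw [fracAt_adversary B (Nat.lt_succ_self t)]
  congr 1
  exact sum_congr rfl fun s hs => by
    rw [fracAt_adversary B (mem_range.mp hs), fracAt_adversary B (by simp at hs; omega)]

theorem likers_zero : likers B 0 = univ := rfl

theorem likers_succ (t : ℕ) : likers B (t + 1) = (likers B t).erase (victim B t) := by
  rw [likers, nextLikers, adversary_succ, List.getLast?_concat]
  rfl

theorem likers_antitone {s t : ℕ} (h : s ≤ t) : likers B t ⊆ likers B s := by
  induction t, h using Nat.le_induction with
  | base => exact subset_rfl
  | succ t _ ih => exact (likers_succ B t ▸ erase_subset _ _).trans ih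

theorem card_likers_add_of_le {t : ℕ} (h : t ≤ Fintype.card A) :
    #(likers B t) + t = Fintype.card A := by
  induction t with
  | zero => simp [likers_zero]
  | succ t ih =>
    have ih := ih (by omega)
    have hne : (likers B t).Nonempty := card_pos.mp (by omega)
    have hmem : victim B t ∈ likers B t := (argminOn_spec _ hne).1
    rw [likers_succ, card_erase_of_mem hmem]
    omega

theorem victim_spec {t : ℕ} (h : t < Fintype.card A) :
    victim B t ∈ likers B t ∧
      ∀ b ∈ likers B t,
        load B (adversary B (t + 1)) (victim B t) ≤ load B (adversary B (t + 1)) b :=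
  argminOn_spec _ (card_pos.mp (by have := card_likers_add_of_le B h.le; omega))

theorem victim_not_mem_likers {s t : ℕ} (h : s < t) : victim B s ∉ likers B t := fun hmem => by
  simpa [likers_succ] using likers_antitone B h hmem

theorem victim_injOn {t : ℕ} (ht : t ≤ Fintype.card A) : Set.InjOn (victim B) (range t) := by
  intro s hs u hu hsu
  simp only [coe_range, Set.mem_Iio] at hs hu
  by_contra hne
  rcases Nat.lt_or_gt_of_ne hne with h | h <;>
    exact victim_not_mem_likers B h (hsu ▸ (victim_spec B (by omega)).1)

theorem compl_likers {t : ℕ} (ht : t ≤ Fintype.card A) :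
    (likers B t)ᶜ = (range t).image (victim B) := by
  refine (eq_of_subset_of_card_le ?_ ?_).symm
  · simp only [subset_iff, mem_image, mem_range, mem_compl]
    rintro _ ⟨s, hs, rfl⟩
    exact victim_not_mem_likers B hs
  · rw [card_compl, card_image_of_injOn (victim_injOn B ht), card_range]
    have := card_likers_add_of_le B ht
    omega

def victimLoad (t : ℕ) : ℝ := load B (adversary B (t + 1)) (victim B t)

theorem victimLoad_le_one {B : FracAlg A} (hB : ValidFrac B) (t : ℕ) : victimLoad B t ≤ 1 :=
  hB.2.2.2 _ _

theorem load_adversary_victim {B : FracAlg A} (hB : ValidFrac B) {s t : ℕ} (h : s < t) :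
    load B (adversary B t) (victim B s) = victimLoad B s := by
  induction t, Nat.succ_le_of_lt h using Nat.le_induction with
  | base => rfl
  | succ t hst ih =>
    rw [load_adversary_succ, ih (by omega), add_eq_left]
    by_contra hne
    exact victim_not_mem_likers B hst (hB.2.1 _ _ _ hne)

theorem uswFrac_adversary {B : FracAlg A} (hB : ValidFrac B) :
    uswFrac B (adversary B (Fintype.card A)) = ∑ t ∈ range (Fintype.card A), victimLoad B t := by
  have himage : (range (Fintype.card A)).image (victim B) = univ := by
    rw [← compl_likers B le_rfl, compl_eq_univ_iff, ← card_eq_zero]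
    have := card_likers_add_of_le B (le_refl (Fintype.card A))
    omega
  rw [← sum_load, ← himage, sum_image (victim_injOn B le_rfl)]
  exact sum_congr rfl fun t ht => load_adversary_victim hB (mem_range.mp ht)

theorem mul_victimLoad_le {B : FracAlg A} (hB : ValidFrac B) {t : ℕ} (ht : t < Fintype.card A) :
    (Fintype.card A - t : ℝ) * victimLoad B t ≤ t + 1 - ∑ s ∈ range t, victimLoad B s := by
  set ℓ := load B (adversary B (t + 1))
  have hcard : ((Fintype.card A - t : ℕ) : ℝ) = Fintype.card A - t := by push_cast [ht.le]; ring
  have hmin : (Fintype.card A - t : ℝ) * victimLoad B t ≤ ∑ b ∈ likers B t, ℓ b := by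
    rw [← hcard, ← nsmul_eq_mul, ← (by have := card_likers_add_of_le B ht.le; omega :
      #(likers B t) = Fintype.card A - t)]
    exact card_nsmul_le_sum _ _ _ (victim_spec B ht).2
  have hpast : ∑ b ∈ (likers B t)ᶜ, ℓ b = ∑ s ∈ range t, victimLoad B s := by
    rw [compl_likers B ht.le, sum_image (victim_injOn B ht.le)]
    exact sum_congr rfl fun s hs => load_adversary_victim hB (by simp at hs; omega)
  have htotal : ∑ b, ℓ b ≤ t + 1 := by
    rw [sum_load]
    exact_mod_cast (length_adversary B (t + 1)) ▸ uswFrac_le_length hB _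
  linarith [sum_add_sum_compl (likers B t) ℓ]

theorem uswFrac_adversary_le {B : FracAlg A} (hB : ValidFrac B) {r : ℕ}
    (hr : exp 1 * (r + 1) ≤ Fintype.card A + 1) :
    uswFrac B (adversary B (Fintype.card A)) ≤ Fintype.card A - r :=
  uswFrac_adversary hB ▸ sum_range_le_sub_of_exp_mul_le (fun t _ => victimLoad_le_one hB t)
    (fun _ ht => mul_victimLoad_le hB ht) hr

theorem card_le_propShare_adversary (classOf : A → Fin 1) :
    (Fintype.card A : ℝ) ≤ propShare classOf (adversary B (Fintype.card A)) 0 := by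
  have := length_le_propShare classOf (adversary B (Fintype.card A)) (σ := victim B)
    (fun t ht => by
      rw [length_adversary] at ht
      rw [likersAt_adversary B ht]
      exact (victim_spec B ht).1)
    (by rw [length_adversary]; exact victim_injOn B le_rfl)
  rwa [length_adversary] at this

end Adversary

/-- No deterministic online algorithm for matching divisible items achieves
`α`-CPROP for any `α > 1 − 1/e`: there is no scheme assigning to every number of
agents `n` and every partition of the `n` agents into `k + 1` classes a valid
deterministic online fractional algorithm that is `α`-CPROP on all instances. -/
theorem stmt_12 (α : ℝ) (hα : α > 1 - 1 / Real.exp 1) :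
    ¬ ∃ Alg : ∀ (n k : ℕ), (Fin n → Fin (k + 1)) → FracAlg (Fin n),
      ∀ (n k : ℕ) (classOf : Fin n → Fin (k + 1)),
        ValidFrac (Alg n k classOf) ∧ IsCPROPfrac classOf α (Alg n k classOf) := by
  rintro ⟨Alg, hAlg⟩
  have he : 1 < exp 1 := by linarith [add_one_le_exp (1 : ℝ)]
  have hα0 : 0 < α := by linarith [(div_lt_one (by linarith)).mpr he]
  obtain ⟨n, r, hr, hnr⟩ :=
    exists_lt_mul_and_exp_mul_le ((lt_div_iff₀' (exp_pos 1)).mp (by linarith : 1 - α < 1 / exp 1))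
  have : NeZero n := ⟨by rintro rfl; push_cast at hnr; nlinarith⟩
  obtain ⟨hB, hprop⟩ := hAlg n 0 fun _ => 0
  set B := Alg n 0 fun _ => 0
  have hupper := uswFrac_adversary_le hB (r := r) (by simpa using hnr)
  have hlower := card_le_propShare_adversary B fun _ => 0
  have hfair := hprop (adversary B (Fintype.card (Fin n))) 0
  rw [classValue_eq_uswFrac] at hfair
  simp only [Fintype.card_fin] at hupper hlower hfair
  nlinarith

end
end
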